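/- arXiv:2209.10799 — 7 statements merged into one kernel-verified Lean document; each statement's English description precedes it below -/
import Mathlib

section
/- Let u_1,…,u_q be monomials in S = K[x_1,…,x_n] with total degree m = Σ_{i=1}^q deg(u_i), and write m = qd + r with 0 ≤ r < q. Write the product u_1⋯u_q = x_{k_1}x_{k_2}⋯x_{k_m} with k_1 ≤ k_2 ≤ ⋯ ≤ k_m, and define u'_i = ∏_{s=0}^{d} x_{k_{sq+i}} for 1 ≤ i ≤ r and u'_i = ∏_{s=0}^{d-1} x_{k_{sq+i}} for r+1 ≤ i ≤ q. Then the q-tuple (u'_1,…,u'_q) is sorted of type (d,r) and satisfies u'_1⋯u'_q = u_1⋯u_q. -/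
/-!
Monomials in `S = K[x_1, …, x_n]` are identified with multisets of (here, natural-number)
indices. -/

/-- Split a list into the sublist of entries in odd positions (1st, 3rd, 5th, …)
and the sublist of entries in even positions (2nd, 4th, …). -/
def altSplit {α : Type*} : List α → List α × List α
  | [] => ([], [])
  | a :: l => (a :: (altSplit l).2, (altSplit l).1)

/-- The sorting `sort(u,v)` of a pair of monomials: write the product `u*v` as
`x_{i_1} x_{i_2} ⋯ x_{i_t}` with `i_1 ≤ i_2 ≤ ⋯ ≤ i_t`; then `u'` is the product of the
variables in odd positions and `v'` the product of those in even positions. -/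
def sortPair {α : Type*} [LinearOrder α] (u v : Multiset α) : Multiset α × Multiset α :=
  (((altSplit ((u + v).sort (· ≤ ·))).1 : List α), ((altSplit ((u + v).sort (· ≤ ·))).2 : List α))

/-- A pair of monomials is sorted if `sort(u,v) = (u,v)`. -/
def IsSortedPair {α : Type*} [LinearOrder α] (u v : Multiset α) : Prop :=
  sortPair u v = (u, v)

/-- A `q`-tuple of monomials is sorted if `(u_i, u_j)` is a sorted pair for all `i < j`. -/
def IsSortedTuple {α : Type*} [LinearOrder α] {q : ℕ} (u : Fin q → Multiset α) : Prop :=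
  ∀ i j : Fin q, i < j → IsSortedPair (u i) (u j)

/-- A `q`-tuple of monomials is sorted of type `(d,r)` if it is sorted, its first `r` entries
have degree `d+1` and the remaining entries have degree `d`. -/
def IsSortedOfType {α : Type*} [LinearOrder α] {q : ℕ} (u : Fin q → Multiset α)
    (d r : ℕ) : Prop :=
  IsSortedTuple u ∧ ∀ i : Fin q, Multiset.card (u i) = if (i : ℕ) < r then d + 1 else d

/-!
Column `i` of the sorted list `l` consists of its entries at positions `i, q + i, 2q + i, …`.
For `i < j < q` the positions `i, j, q + i, q + j, 2q + i, …` increase, so interleaving columns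
`i` and `j` gives a sorted list, which is therefore the sorted product of the two columns; its
entries in odd and in even positions are the two columns again. Division with remainder by `q`
shows that the columns partition the positions `0, …, m - 1`, whence the product identity.
-/

section

variable {α : Type*}

theorem altSplit_map_range (F : ℕ → α) (n : ℕ) :
    altSplit ((List.range n).map F) =
      ((List.range ((n + 1) / 2)).map (fun s => F (2 * s)),
        (List.range (n / 2)).map (fun s => F (2 * s + 1))) := by
  induction n generalizing F with
  | zero => rfl
  | succ n ih =>
    have hhalf : (n + 1 + 1) / 2 = (n / 2) + 1 := by omega
    rw [List.range_succ_eq_map, List.map_cons, List.map_map, altSplit, ih, hhalf,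
      List.range_succ_eq_map]
    simp only [List.map_cons, List.map_map, Function.comp_def, Nat.succ_eq_add_one]
    ring_nf

theorem coe_altSplit_add (L : List α) : ((altSplit L).1 : Multiset α) + (altSplit L).2 = L := by
  induction L with
  | nil => rfl
  | cons a L ih => rw [altSplit, ← Multiset.cons_coe, Multiset.cons_add, add_comm, ih]; rfl

theorem isSortedPair_altSplit [LinearOrder α] {L : List α} (hL : L.SortedLE) :
    IsSortedPair ((altSplit L).1 : Multiset α) (altSplit L).2 := by
  rw [IsSortedPair, sortPair, coe_altSplit_add, Multiset.coe_sort,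
    List.mergeSort_eq_self _ hL.pairwise]

theorem List.map_range_getD (l : List α) (x : α) : (List.range l.length).map (l.getD · x) = l :=
  List.ext_getElem (by simp) fun k hk _ => by simp [List.getElem?_eq_getElem ‹k < l.length›]

theorem List.SortedLE.getD_le_getD [Preorder α] {l : List α} (hl : l.SortedLE) (x : α) {k k' : ℕ}
    (hk : k ≤ k') (hk' : k' < l.length) : l.getD k x ≤ l.getD k' x := by
  rw [List.getD_eq_getElem _ _ (hk.trans_lt hk'), List.getD_eq_getElem _ _ hk']
  exact hl.getElem_le_getElem_of_le hk

theorem List.SortedLE.map_range_getD [Preorder α] {l : List α} (hl : l.SortedLE) (x : α)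
    {p : ℕ → ℕ} (hp : Monotone p) {n : ℕ} (hn : ∀ t < n, p t < l.length) :
    ((List.range n).map (fun t => l.getD (p t) x)).SortedLE := by
  rw [List.sortedLE_iff_pairwise, List.pairwise_map]
  exact List.pairwise_lt_range.imp_of_mem fun _ hb hab =>
    hl.getD_le_getD x (hp hab.le) (hn _ (List.mem_range.1 hb))

theorem Multiset.coe_map_range (g : ℕ → α) (n : ℕ) :
    (((List.range n).map g : List α) : Multiset α) = ∑ s ∈ Finset.range n, {g s} := by
  rw [← Multiset.map_coe, Multiset.coe_range, Finset.sum_eq_multiset_sum, Finset.range_val,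
    ← Multiset.sum_map_singleton (Multiset.map g _), Multiset.map_map]
  rfl

theorem Nat.mul_add_lt_mul_add_iff {q d r i s : ℕ} (hr : r < q) (hi : i < q) :
    s * q + i < q * d + r ↔ s < if i < r then d + 1 else d := by
  split_ifs with hir <;> constructor <;> intro h <;> nlinarith

theorem monotone_interleaved_index {q i j : ℕ} (hij : i ≤ j) (hjq : j ≤ i + q) :
    Monotone fun t => t / 2 * q + if Even t then i else j := by
  refine monotone_nat_of_le_succ fun t => ?_
  rcases Nat.even_or_odd t with ht | ht
  · have : (t + 1) / 2 = t / 2 := by rcases ht with ⟨k, rfl⟩; omega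
    rw [if_pos ht, if_neg (Nat.not_even_iff_odd.2 ht.add_one), this]
    omega
  · have : (t + 1) / 2 = t / 2 + 1 := by rcases ht with ⟨k, rfl⟩; omega
    rw [if_neg (Nat.not_even_iff_odd.2 ht), if_pos ht.add_one, this]
    nlinarith

theorem Finset.sum_range_mul_add_eq_sum_columns {M : Type*} [AddCommMonoid M] {q d r : ℕ}
    (hr : r < q) (F : ℕ → M) :
    ∑ k ∈ Finset.range (q * d + r), F k =
      ∑ i : Fin q, ∑ s ∈ Finset.range (if (i : ℕ) < r then d + 1 else d), F (s * q + i) := by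
  have hq : 0 < q := by omega
  rw [Finset.sum_sigma']
  symm
  refine Finset.sum_nbij' (fun p => p.2 * q + p.1) (fun k => ⟨⟨k % q, Nat.mod_lt _ hq⟩, k / q⟩)
    ?_ ?_ ?_ ?_ fun _ _ => rfl
  · rintro ⟨i, s⟩ h
    simp only [Finset.mem_sigma, Finset.mem_univ, Finset.mem_range, true_and] at h ⊢
    exact (Nat.mul_add_lt_mul_add_iff hr i.isLt).2 h
  · intro k hk
    simp only [Finset.mem_sigma, Finset.mem_univ, Finset.mem_range, true_and] at hk ⊢
    rwa [← Nat.mul_add_lt_mul_add_iff hr (Nat.mod_lt _ hq), Nat.div_add_mod']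
  · rintro ⟨i, s⟩ _
    have hi : (s * q + i) % q = i := by simp [Nat.mod_eq_of_lt i.isLt]
    have hs : (s * q + i) / q = s := by
      rw [Nat.add_comm, Nat.add_mul_div_right _ _ hq, Nat.div_eq_of_lt i.isLt, Nat.zero_add]
    simp [hi, hs]
  · intro k _
    exact Nat.div_add_mod' k q

theorem isSortedPair_columns [LinearOrder α] {l : List α} (hl : l.SortedLE) (x : α)
    {q d r i j : ℕ} (hr : r < q) (hlen : l.length = q * d + r) (hij : i < j) (hjq : j < q) :
    IsSortedPair
      (((List.range (if i < r then d + 1 else d)).map fun s => l.getD (s * q + i) x : List α) :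
        Multiset α)
      (((List.range (if j < r then d + 1 else d)).map fun s => l.getD (s * q + j) x : List α) :
        Multiset α) := by
  have hc : (if j < r then d + 1 else d) ≤ (if i < r then d + 1 else d) ∧
      (if i < r then d + 1 else d) ≤ (if j < r then d + 1 else d) + 1 := by
    constructor <;> split_ifs <;> omega
  set ci := if i < r then d + 1 else d
  set cj := if j < r then d + 1 else d
  set p : ℕ → ℕ := fun t => t / 2 * q + if Even t then i else j
  have hodd : ∀ s, (2 * s + 1) / 2 = s := by omega
  have hp_lt : ∀ t < ci + cj, p t < l.length := by
    intro t ht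
    rw [hlen]
    rcases Nat.even_or_odd' t with ⟨s, rfl | rfl⟩
    · simpa [p] using (Nat.mul_add_lt_mul_add_iff hr (hij.trans hjq)).2 (by omega : s < ci)
    · simpa [p, Nat.even_add_one, hodd] using
        (Nat.mul_add_lt_mul_add_iff hr hjq).2 (by omega : s < cj)
  have hsplit : altSplit ((List.range (ci + cj)).map fun t => l.getD (p t) x) =
      ((List.range ci).map fun s => l.getD (s * q + i) x,
        (List.range cj).map fun s => l.getD (s * q + j) x) := by
    rw [altSplit_map_range, show (ci + cj + 1) / 2 = ci by omega, show (ci + cj) / 2 = cj by omega]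
    simp [p, hodd]
  have hpair := isSortedPair_altSplit
    (hl.map_range_getD x (monotone_interleaved_index hij.le (by omega)) hp_lt)
  rwa [hsplit] at hpair

end

/-- Let `u_1, …, u_q` be monomials with `m = Σ deg u_i = q*d + r`, `0 ≤ r < q`.
Write `u_1 ⋯ u_q = x_{k_1} ⋯ x_{k_m}` with `k_1 ≤ ⋯ ≤ k_m` (0-indexed below), and set
`u'_i = ∏_{s=0}^{d} x_{k_{s q + i}}` for the first `r` indices and
`u'_i = ∏_{s=0}^{d-1} x_{k_{s q + i}}` for the remaining ones. Then `(u'_1, …, u'_q)` is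
sorted of type `(d,r)` and `u'_1 ⋯ u'_q = u_1 ⋯ u_q`. -/
theorem sorted_tuple_construction (q d r : ℕ) (hr : r < q)
    (u : Fin q → Multiset ℕ)
    (hm : ∑ i, Multiset.card (u i) = q * d + r)
    (l : List ℕ) (hl : l = (∑ i, u i).sort (· ≤ ·))
    (u' : Fin q → Multiset ℕ)
    (hu' : ∀ i : Fin q, u' i =
      ((List.range (if (i : ℕ) < r then d + 1 else d)).map
        (fun s => l.getD (s * q + (i : ℕ)) 0) : List ℕ)) :
    IsSortedOfType u' d r ∧ ∑ i, u' i = ∑ i, u i := by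
  have hsorted : l.SortedLE := hl ▸ (Multiset.pairwise_sort _ _).sortedLE
  have hcoe : (l : Multiset ℕ) = ∑ i, u i := hl ▸ Multiset.sort_eq _ _
  have hlen : l.length = q * d + r := by
    rw [← hm, ← Multiset.card_sum, ← hcoe, Multiset.coe_card]
  refine ⟨⟨fun i j hij => ?_, fun i => by simp [hu']⟩, ?_⟩
  · rw [hu', hu']
    exact isSortedPair_columns hsorted 0 hr hlen hij j.isLt
  · rw [← hcoe, ← List.map_range_getD l 0, hlen, Multiset.coe_map_range,
      Finset.sum_range_mul_add_eq_sum_columns hr]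
    simp only [hu', Multiset.coe_map_range]
end

section
/- Let (u_1,…,u_q) be an arbitrary q-tuple of monomials in S = K[x_1,…,x_n] and let m = Σ_{i=1}^q deg(u_i). Then there exists a unique sorted q-tuple (u'_1,…,u'_q) of monomials such that u_1⋯u_q = u'_1⋯u'_q. Moreover this unique sorted q-tuple is of type (d,r), where d and r are the unique integers with m = qd + r and 0 ≤ r < q. -/
/-!
Encode a lower set of indices as an antitone predicate `p` and write `#_p w` for the number
of entries of `w` satisfying `p`. Sorting `(u, v)` deals the sorted entries of `u + v`
alternately to `u'` and `v'`, and the entries satisfying `p` form an initial segment, so `(u, v)`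
is sorted iff `#_p v ≤ #_p u ≤ #_p v + 1` for every such `p`. Hence a tuple is sorted iff all its
count vectors `i ↦ #_p u_i` are balanced (non-increasing, first and last entries differing by at
most one). A balanced `c` satisfies `∑ c ≤ q c_i + i < ∑ c + q`, so a balanced vector with sum
`q d + r`, `r < q`, is `(d + 1, …, d + 1, d, …, d)` with `r` entries `d + 1`. Since a multiset is
determined by its counts on lower sets, this gives uniqueness, and `p = ⊤` gives the type. For
existence, deal the sorted product round-robin into `q` piles: every count vector is then
balanced.
-/

def IsBalanced {q : ℕ} (c : Fin q → ℕ) : Prop :=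
  ∀ i j, i < j → c j ≤ c i ∧ c i ≤ c j + 1

open Finset

namespace IsBalanced

variable {q : ℕ}

theorem sum_le {c : Fin q → ℕ} (hc : IsBalanced c) (i : Fin q) : ∑ j, c j ≤ q * c i + i := by
  calc ∑ j, c j ≤ ∑ j, (c i + if j < i then 1 else 0) := by
        gcongr with j
        split_ifs with hji
        · exact (hc j i hji).2
        · rcases (not_lt.1 hji).eq_or_lt with rfl | hij
          · simp
          · simpa using (hc i j hij).1
    _ = q * c i + i := by
        simp [sum_add_distrib, sum_boole, filter_gt_eq_Iio]

theorem lt_sum_add {c : Fin q → ℕ} (hc : IsBalanced c) (i : Fin q) : q * c i + i < ∑ j, c j + q := by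
  have hcard : #(Ioi i) + i < q := by rw [Fin.card_Ioi]; omega
  calc q * c i + i = ∑ _j : Fin q, c i + i := by simp
    _ ≤ ∑ j, (c j + if i < j then 1 else 0) + i := by
        gcongr with j
        split_ifs with hij
        · exact (hc i j hij).2
        · rcases (not_lt.1 hij).eq_or_lt with rfl | hji
          · simp
          · simpa using (hc j i hji).1
    _ < ∑ j, c j + q := by
        simp only [sum_add_distrib, sum_boole, filter_lt_eq_Ioi, Nat.cast_id]
        omega

theorem eq_ite {c : Fin q → ℕ} (hc : IsBalanced c) {d r : ℕ} (hr : r < q) (hsum : ∑ i, c i = q * d + r)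
    (i : Fin q) : c i = if i < r then d + 1 else d := by
  have h₁ := hc.sum_le i
  have h₂ := hc.lt_sum_add i
  have hi := i.isLt
  split_ifs with hir
  · have h₃ : d < c i := Nat.lt_of_mul_lt_mul_left (a := q) (by omega)
    have h₄ : c i < d + 2 := Nat.lt_of_mul_lt_mul_left (a := q) (by rw [mul_add]; omega)
    omega
  · have h₃ : d < c i + 1 := Nat.lt_of_mul_lt_mul_left (a := q) (by rw [mul_add]; omega)
    have h₄ : c i < d + 1 := Nat.lt_of_mul_lt_mul_left (a := q) (by rw [mul_add]; omega)
    omega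

theorem eq_of_sum_eq {c c' : Fin q → ℕ} (hc : IsBalanced c) (hc' : IsBalanced c')
    (hsum : ∑ i, c i = ∑ i, c' i) : c = c' := by
  funext i
  have hq : 0 < q := i.pos
  have hdiv := (Nat.div_add_mod (∑ j, c j) q).symm
  rw [hc.eq_ite (Nat.mod_lt _ hq) hdiv, hc'.eq_ite (Nat.mod_lt _ hq) (hsum.symm.trans hdiv)]

theorem cons_succ_last {c : Fin (q + 1) → ℕ} (hc : IsBalanced c) :
    IsBalanced
      (Fin.cons (c (Fin.last q) + 1) fun i : Fin q => c i.castSucc : Fin (q + 1) → ℕ) := by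
  intro i j hij
  induction j using Fin.cases with
  | zero => exact absurd hij (Fin.not_lt_zero i)
  | succ j =>
    induction i using Fin.cases with
    | zero =>
      have := hc _ _ (Fin.castSucc_lt_last j)
      simp only [Fin.cons_zero, Fin.cons_succ]
      omega
    | succ i =>
      simp only [Fin.cons_succ]
      exact hc _ _ (Fin.castSucc_lt_castSucc_iff.2 (Fin.succ_lt_succ_iff.1 hij))

end IsBalanced

namespace Multiset

variable {α : Type*}

theorem countP_finset_sum {ι : Type*} (p : α → Prop) [DecidablePred p] (s : Finset ι)
    (f : ι → Multiset α) : (∑ i ∈ s, f i).countP p = ∑ i ∈ s, (f i).countP p :=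
  map_sum (countPAddMonoidHom p) f s

theorem eq_of_countP_eq_of_antitone [LinearOrder α] {s t : Multiset α}
    (h : ∀ (p : α → Prop) [DecidablePred p], Antitone p → s.countP p = t.countP p) :
    s = t := by
  have hle (u : Multiset α) (a : α) : u.countP (· ≤ a) = u.countP (· < a) + u.count a := by
    induction u using Multiset.induction_on with
    | empty => simp
    | cons b u ih =>
      simp only [countP_cons, count_cons, ih]
      rcases lt_trichotomy a b with hab | rfl | hab
      · simp [not_le.2 hab, hab.not_gt, hab.ne]
      · simp
        omega
      · simp [hab.le, hab, hab.ne']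
        omega
  ext a
  have hs := hle s a
  have ht := hle t a
  rw [h _ antitone_le, h _ antitone_lt] at hs
  omega

end Multiset

open Multiset

section Sorting

variable {α : Type*} [LinearOrder α] {p : α → Prop} [DecidablePred p]

theorem countP_altSplit (hp : Antitone p) {l : List α} (hl : l.Pairwise (· ≤ ·)) :
    countP p ((altSplit l).1 : Multiset α) = (countP p (l : Multiset α) + 1) / 2 ∧
      countP p ((altSplit l).2 : Multiset α) = countP p (l : Multiset α) / 2 := by
  induction l with
  | nil => simp [altSplit]
  | cons a l ih =>
    obtain ⟨ha, hl⟩ := List.pairwise_cons.1 hl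
    obtain ⟨ih₁, ih₂⟩ := ih hl
    simp only [altSplit, ← cons_coe]
    by_cases hpa : p a
    · rw [countP_cons_of_pos _ hpa, countP_cons_of_pos _ hpa, ih₁, ih₂]
      omega
    · have hl₀ : countP p (l : Multiset α) = 0 :=
        countP_eq_zero.2 fun b hb hpb => hpa (hp (ha b hb) hpb)
      rw [countP_cons_of_neg _ hpa, countP_cons_of_neg _ hpa, ih₁, ih₂, hl₀]
      simp

theorem countP_sortPair (hp : Antitone p) (u v : Multiset α) :
    (sortPair u v).1.countP p = ((u + v).countP p + 1) / 2 ∧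
      (sortPair u v).2.countP p = (u + v).countP p / 2 := by
  simpa only [sortPair, Multiset.sort_eq] using
    countP_altSplit hp (pairwise_sort (u + v) (· ≤ ·))

theorem isSortedPair_iff_countP {u v : Multiset α} :
    IsSortedPair u v ↔ ∀ (p : α → Prop) [DecidablePred p], Antitone p →
      v.countP p ≤ u.countP p ∧ u.countP p ≤ v.countP p + 1 := by
  constructor
  · intro h p _ hp
    have := countP_sortPair hp u v
    rw [show sortPair u v = (u, v) from h, countP_add] at this
    dsimp only at this
    omega
  · intro h
    have hc : ∀ (p : α → Prop) [DecidablePred p], Antitone p →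
        (sortPair u v).1.countP p = u.countP p ∧ (sortPair u v).2.countP p = v.countP p := by
      intro p _ hp
      obtain ⟨h₁, h₂⟩ := countP_sortPair hp u v
      have h₃ := h p hp
      rw [countP_add] at h₁ h₂
      omega
    exact Prod.ext (eq_of_countP_eq_of_antitone fun p _ hp => (hc p hp).1)
      (eq_of_countP_eq_of_antitone fun p _ hp => (hc p hp).2)

theorem isSortedTuple_iff_isBalanced_countP {q : ℕ} {u : Fin q → Multiset α} :
    IsSortedTuple u ↔
      ∀ (p : α → Prop) [DecidablePred p], Antitone p →
        IsBalanced fun i => (u i).countP p := by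
  simp only [IsSortedTuple, isSortedPair_iff_countP, IsBalanced]
  exact ⟨fun h p _ hp i j hij => h i j hij p hp, fun h i j hij p _ hp => h p hp i j hij⟩

end Sorting

section Deal

variable {α : Type*} {q : ℕ}

-- `deal l i` collects the entries `l[k]` with `k ≡ i [MOD q + 1]`: the list is dealt out
-- round-robin into `q + 1` piles.
def deal : List α → Fin (q + 1) → Multiset α
  | [] => 0
  | a :: l => Fin.cons (a ::ₘ deal l (Fin.last q)) fun i => deal l i.castSucc

theorem sum_deal (l : List α) : ∑ i, deal (q := q) l i = l := by
  induction l with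
  | nil => simp [deal]
  | cons a l ih =>
    rw [deal, Fin.sum_cons, ← cons_coe, ← ih, Fin.sum_univ_castSucc (fun i => deal l i),
      cons_add, add_comm]

theorem deal_le (l : List α) (i : Fin (q + 1)) : deal l i ≤ l :=
  sum_deal l ▸ Finset.single_le_sum (fun _ _ => zero_le _) (Finset.mem_univ i)

theorem isBalanced_countP_deal [LinearOrder α] {p : α → Prop} [DecidablePred p]
    (hp : Antitone p) {l : List α} (hl : l.Pairwise (· ≤ ·)) :
    IsBalanced fun i => (deal (q := q) l i).countP p := by
  induction l with
  | nil => simp [IsBalanced, deal]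
  | cons a l ih =>
    obtain ⟨ha, hl⟩ := List.pairwise_cons.1 hl
    by_cases hpa : p a
    · convert (ih hl).cons_succ_last using 1
      funext i
      cases i using Fin.cases <;> simp [deal, countP_cons_of_pos _ hpa]
    · have hzero : ∀ i, (deal (q := q) (a :: l) i).countP p = 0 := by
        refine fun i => Nat.eq_zero_of_le_zero ((countP_le_of_le p (deal_le _ i)).trans_eq ?_)
        refine countP_eq_zero.2 fun b hb hpb => hpa ?_
        rcases List.mem_cons.1 (mem_coe.1 hb) with rfl | hb
        exacts [hpb, hp (ha b hb) hpb]
      simp [IsBalanced, hzero]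

theorem isSortedTuple_deal [LinearOrder α] {l : List α} (hl : l.Pairwise (· ≤ ·)) :
    IsSortedTuple (deal (q := q) l) :=
  isSortedTuple_iff_isBalanced_countP.2 fun _ _ hp => isBalanced_countP_deal hp hl

end Deal

/-- Lemma 1.1: For an arbitrary `q`-tuple `(u_1, …, u_q)` of monomials with
`m = Σ deg u_i`, there exists a unique sorted `q`-tuple `(u'_1, …, u'_q)` with
`u_1 ⋯ u_q = u'_1 ⋯ u'_q`; moreover it is of type `(d,r)`, where `m = q*d + r`, `0 ≤ r < q`. -/
theorem exists_unique_sorted_tuple (q d r : ℕ) (hr : r < q)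
    (u : Fin q → Multiset ℕ)
    (hm : ∑ i, Multiset.card (u i) = q * d + r) :
    ∃ u' : Fin q → Multiset ℕ,
      IsSortedTuple u' ∧ (∑ i, u' i = ∑ i, u i) ∧ IsSortedOfType u' d r ∧
      ∀ v : Fin q → Multiset ℕ, IsSortedTuple v → (∑ i, v i = ∑ i, u i) → v = u' := by
  obtain ⟨q, rfl⟩ := Nat.exists_eq_add_one_of_ne_zero (by omega : q ≠ 0)
  have hL := pairwise_sort (∑ i, u i) (· ≤ ·)
  have hsum : ∑ i, deal (q := q) ((∑ i, u i).sort (· ≤ ·)) i = ∑ i, u i :=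
    (sum_deal _).trans (sort_eq _ _)
  have hsorted := isSortedTuple_deal (q := q) hL
  have hbal := isSortedTuple_iff_isBalanced_countP.1 hsorted
  refine ⟨_, hsorted, hsum, ⟨hsorted, fun i => ?_⟩, fun v hv hvsum => ?_⟩
  · simpa using (hbal (fun _ => True) antitone_const).eq_ite hr
      (by simpa [← card_sum, hsum] using hm) i
  · funext i
    refine eq_of_countP_eq_of_antitone fun p _ hp => ?_
    refine congrFun ((isSortedTuple_iff_isBalanced_countP.1 hv p hp).eq_of_sum_eq (hbal p hp) ?_) i
    rw [← countP_finset_sum, ← countP_finset_sum, hvsum, hsum]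
end

section
/- Let u = (u_1,…,u_q) be a q-tuple of monomials in S = K[x_1,…,x_n] with d_i = deg(u_i), let t be an index with d_t = max{d_i : 1 ≤ i ≤ q} and s an index with d_s = min{d_i : 1 ≤ i ≤ q}, and assume d_t − d_s > 1. Let u~ be the q-tuple obtained from u by replacing the pair (u_t, u_s) by sort(u_t, u_s). Then f(u~) < f(u), where f is the function on q-tuples of monomials defined by f(w_1,…,w_q) = Σ_{i<j} |deg(w_i) − deg(w_j)|. -/
/-- The function `f` on `q`-tuples of monomials: `f(w_1,…,w_q) = Σ_{i<j} |deg w_i − deg w_j|`. -/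
def fdeg {α : Type*} {q : ℕ} (w : Fin q → Multiset α) : ℤ :=
  ∑ p ∈ Finset.univ.filter (fun p : Fin q × Fin q => p.1 < p.2),
    |(Multiset.card (w p.1) : ℤ) - (Multiset.card (w p.2) : ℤ)|

/-!
Twice `f(w)` is the full double sum of `|deg w_i - deg w_j|`; split off the rows and columns
of `t` and `s`. Sorting keeps `deg u_t + deg u_s` and makes the two new degrees `a, b` differ by
at most one. Every other degree `d_k` lies in `[deg u_s, deg u_t]`, so
`|a - d_k| + |b - d_k| ≤ deg u_t - deg u_s = |deg u_t - d_k| + |deg u_s - d_k|`, while the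
`(t, s)` term drops from more than `1` to at most `1`.
-/

lemma length_altSplit {α : Type*} (l : List α) :
    (altSplit l).1.length = (l.length + 1) / 2 ∧ (altSplit l).2.length = l.length / 2 := by
  induction l with
  | nil => simp [altSplit]
  | cons a l ih =>
    simp only [altSplit, List.length_cons, ih, and_true]
    omega

lemma card_sortPair {α : Type*} [LinearOrder α] (u v : Multiset α) :
    Multiset.card (sortPair u v).1 = (Multiset.card u + Multiset.card v + 1) / 2 ∧
    Multiset.card (sortPair u v).2 = (Multiset.card u + Multiset.card v) / 2 := by
  simpa [sortPair] using length_altSplit ((u + v).sort (· ≤ ·))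

lemma card_sortPair_fst_add_snd {α : Type*} [LinearOrder α] (u v : Multiset α) :
    Multiset.card (sortPair u v).1 + Multiset.card (sortPair u v).2 =
      Multiset.card u + Multiset.card v := by
  have := card_sortPair u v
  omega

lemma abs_card_sortPair_sub_le_one {α : Type*} [LinearOrder α] (u v : Multiset α) :
    |(Multiset.card (sortPair u v).1 : ℤ) - Multiset.card (sortPair u v).2| ≤ 1 := by
  have := card_sortPair u v
  exact abs_le.mpr ⟨by omega, by omega⟩

lemma two_nsmul_sum_filter_lt_of_symm {ι M : Type*} [Fintype ι] [LinearOrder ι]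
    [AddCommMonoid M] (g : ι → ι → M) (hsymm : ∀ i j, g i j = g j i) (hdiag : ∀ i, g i i = 0) :
    2 • ∑ p ∈ Finset.univ.filter (fun p : ι × ι => p.1 < p.2), g p.1 p.2 = ∑ i, ∑ j, g i j := by
  have hsplit (i j : ι) :
      g i j = (if i < j then g i j else 0) + (if j < i then g j i else 0) := by
    rcases lt_trichotomy i j with h | rfl | h
    · simp [h, h.not_gt]
    · simp [hdiag]
    · simp [h, h.not_gt, hsymm i j]
  rw [Finset.sum_congr rfl fun i _ => Finset.sum_congr rfl fun j _ => hsplit i j]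
  simp only [Finset.sum_add_distrib]
  rw [Finset.sum_comm (f := fun i j => if j < i then g j i else 0), two_nsmul,
    Finset.sum_filter, Fintype.sum_prod_type]

lemma sum_sum_split_pair_of_symm {ι M : Type*} [Fintype ι] [DecidableEq ι] [AddCommMonoid M]
    (g : ι → ι → M) (hsymm : ∀ i j, g i j = g j i) (hdiag : ∀ i, g i i = 0) {t s : ι}
    (hts : t ≠ s) :
    ∑ i, ∑ j, g i j = 2 • (g t s + ∑ k ∈ {t, s}ᶜ, (g t k + g s k)) +
      ∑ i ∈ {t, s}ᶜ, ∑ j ∈ {t, s}ᶜ, g i j := by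
  have hrow (i : ι) : ∑ j, g i j = g i t + g i s + ∑ j ∈ {t, s}ᶜ, g i j := by
    rw [← Finset.sum_add_sum_compl {t, s}, Finset.sum_pair hts]
  simp_rw [hrow, ← Finset.sum_add_sum_compl {t, s} (fun i => g i t + g i s + _),
    Finset.sum_pair hts, Finset.sum_add_distrib, hdiag, hsymm s t, hsymm _ t, hsymm _ s]
  abel

lemma abs_sub_add_abs_sub_le_of_add_eq {α : Type*} [CommRing α] [LinearOrder α]
    [IsStrictOrderedRing α] {a b lo hi x : α} (hab : a + b = hi + lo)
    (hgap : |a - b| ≤ hi - lo) (hlo : lo ≤ x) (hhi : x ≤ hi) :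
    |a - x| + |b - x| ≤ |hi - x| + |lo - x| := by
  rw [abs_of_nonneg (sub_nonneg.mpr hhi), abs_of_nonpos (sub_nonpos.mpr hlo)]
  rcases abs_le.mp hgap with ⟨h1, h2⟩
  rcases abs_cases (a - x) with ⟨ha, -⟩ | ⟨ha, -⟩ <;>
    rcases abs_cases (b - x) with ⟨hb, -⟩ | ⟨hb, -⟩ <;>
    rw [ha, hb] <;> linarith

section

variable {α : Type*} {q : ℕ}

def degDist (w : Fin q → Multiset α) (i j : Fin q) : ℤ :=
  |(Multiset.card (w i) : ℤ) - (Multiset.card (w j) : ℤ)|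

lemma two_mul_fdeg_split_pair (w : Fin q → Multiset α) {t s : Fin q} (hts : t ≠ s) :
    2 * fdeg w = 2 * (degDist w t s + ∑ k ∈ {t, s}ᶜ, (degDist w t k + degDist w s k)) +
      ∑ i ∈ {t, s}ᶜ, ∑ j ∈ {t, s}ᶜ, degDist w i j := by
  have hsymm (i j : Fin q) : degDist w i j = degDist w j i := abs_sub_comm _ _
  have hdiag (i : Fin q) : degDist w i i = 0 := by simp [degDist]
  have hfdeg : fdeg w = ∑ p ∈ Finset.univ.filter (fun p : Fin q × Fin q => p.1 < p.2),
      degDist w p.1 p.2 := rfl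
  have h := sum_sum_split_pair_of_symm _ hsymm hdiag hts
  rw [← two_nsmul_sum_filter_lt_of_symm _ hsymm hdiag, two_nsmul, two_nsmul] at h
  rw [hfdeg]
  linarith

end

/-- if `u_t` has maximal degree, `u_s` has minimal degree, `deg u_t − deg u_s > 1`,
and `ũ` is obtained from `u` by replacing the pair `(u_t, u_s)` with `sort(u_t, u_s)`,
then `f(ũ) < f(u)`. -/
theorem fdeg_lt_of_sort_extremes (q : ℕ) (u : Fin q → Multiset ℕ) (t s : Fin q)
    (hmax : ∀ i : Fin q, Multiset.card (u i) ≤ Multiset.card (u t))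
    (hmin : ∀ i : Fin q, Multiset.card (u s) ≤ Multiset.card (u i))
    (hgap : Multiset.card (u s) + 1 < Multiset.card (u t))
    (v : Fin q → Multiset ℕ)
    (hvt : v t = (sortPair (u t) (u s)).1)
    (hvs : v s = (sortPair (u t) (u s)).2)
    (hother : ∀ k : Fin q, k ≠ t → k ≠ s → v k = u k) :
    fdeg v < fdeg u := by
  have hts : t ≠ s := by rintro rfl; omega
  have hsum : (Multiset.card (v t) : ℤ) + Multiset.card (v s) =
      Multiset.card (u t) + Multiset.card (u s) := by
    rw [hvt, hvs]
    exact_mod_cast card_sortPair_fst_add_snd _ _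
  have hbal : |(Multiset.card (v t) : ℤ) - Multiset.card (v s)| ≤ 1 := by
    rw [hvt, hvs]
    exact abs_card_sortPair_sub_le_one _ _
  have hpair : degDist v t s < degDist u t s :=
    hbal.trans_lt ((by omega : (1 : ℤ) < Multiset.card (u t) - Multiset.card (u s)).trans_le
      (le_abs_self _))
  have hout (k : Fin q) (hk : k ∈ ({t, s}ᶜ : Finset (Fin q))) : v k = u k := by
    simp only [Finset.mem_compl, Finset.mem_insert, Finset.mem_singleton, not_or] at hk
    exact hother k hk.1 hk.2
  have hmixed : ∑ k ∈ {t, s}ᶜ, (degDist v t k + degDist v s k) ≤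
      ∑ k ∈ {t, s}ᶜ, (degDist u t k + degDist u s k) := by
    refine Finset.sum_le_sum fun k hk => ?_
    simp only [degDist, hout k hk]
    exact abs_sub_add_abs_sub_le_of_add_eq hsum (by omega) (by exact_mod_cast hmin k)
      (by exact_mod_cast hmax k)
  have hrest : ∑ i ∈ {t, s}ᶜ, ∑ j ∈ {t, s}ᶜ, degDist v i j =
      ∑ i ∈ {t, s}ᶜ, ∑ j ∈ {t, s}ᶜ, degDist u i j :=
    Finset.sum_congr rfl fun i hi => Finset.sum_congr rfl fun j hj => by
      rw [degDist, degDist, hout i hi, hout j hj]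
  linarith [two_mul_fdeg_split_pair u hts, two_mul_fdeg_split_pair v hts]
end

section
/- Let B = {u_1,…,u_m} be a finite sortable set of monomials in S = K[x_1,…,x_n], where K is a field, and consider the K-algebra homomorphism φ : K[y_1,…,y_m] → S[t] defined by φ(y_i) = u_i t for 1 ≤ i ≤ m, whose image is the toric ring A = K[u_1 t,…,u_m t]. Then the kernel of φ is generated, as an ideal, by the quadratic binomials y_i y_j − y_k y_l for all pairs (u_i, u_j) that are unsorted with sort(u_i, u_j) = (u_k, u_l). -/
open MvPolynomial

/-!
Write `c_z(x) = #{i ∈ z : i ≤ x}` for a monomial `z`. Since `sort(v,w)` deals out the sorted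
product `vw` alternately, its two halves have counts `⌈(c_v + c_w)/2⌉` and `⌊(c_v + c_w)/2⌋`;
so `(v,w)` is sorted iff `c_w ≤ c_v ≤ c_w + 1`.

The toric map sends `y^A` to `t^|A| ∏_{a ∈ A} u_a`, and distinct such terms are linearly
independent, so its kernel is spanned by the binomials `y^A - y^B` with equal images. Replacing
an unsorted pair in `A` by its sorting changes `y^A` by a multiple of a sorting relation, and
this process terminates: it lowers `∑_z ∑_x c_z(x)²`, or, when `c_v` and `c_w` differ by at most
one everywhere, keeps it and replaces `(v,w)` by `(max, min)`, which spreads out `∑_x c_z(x)`.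
A pairwise sorted `q`-tuple is determined by its product `P`: its top element `v` satisfies
`q c_v - (q - 1) ≤ c_P ≤ q c_v`. Hence `y^A` and `y^B` reduce to the same sorted monomial.
-/

section Sorting

variable {α : Type*}

theorem altSplit_countP [Preorder α] (p : α → Prop) [DecidablePred p]
    (hp : ∀ a b, a ≤ b → p b → p a) {l : List α} (hl : l.Pairwise (· ≤ ·)) :
    (altSplit l).1.countP p = (l.countP p + 1) / 2 ∧
      (altSplit l).2.countP p = l.countP p / 2 := by
  induction l with
  | nil => simp [altSplit]
  | cons a l ih =>
    rw [List.pairwise_cons] at hl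
    obtain ⟨h1, h2⟩ := ih hl.2
    by_cases ha : p a
    · simp only [altSplit, List.countP_cons, ha, decide_true, if_true]
      omega
    · have hl0 : l.countP p = 0 :=
        List.countP_eq_zero.2 fun b hb hpb => ha (hp a b (hl.1 b hb) (by simpa using hpb))
      simp only [altSplit, List.countP_cons, ha, hl0, decide_false, Bool.false_eq_true,
        if_false, add_zero] at h1 h2 ⊢
      omega

variable [LinearOrder α]

def cumCount : Multiset α →+ (α → ℕ) :=
  AddMonoidHom.pi fun x => Multiset.countPAddMonoidHom (· ≤ x)

theorem cumCount_apply (z : Multiset α) (x : α) : cumCount z x = z.countP (· ≤ x) := rfl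

theorem countP_lt_eq_of_cumCount_eq {v w : Multiset α} (h : cumCount v = cumCount w) (a : α) :
    v.countP (· < a) = w.countP (· < a) := by
  classical
  -- on `v + w`, `· < a` agrees with `· ≤ b` for the largest `b < a` occurring in `v + w`
  set T := ((v + w).filter (· < a)).toFinset
  have hmemT : ∀ y ∈ v + w, y < a → y ∈ T := fun y hy hya =>
    Multiset.mem_toFinset.2 (Multiset.mem_filter.2 ⟨hy, hya⟩)
  rcases T.eq_empty_or_nonempty with hT | hT
  · have hlt : ∀ y ∈ v + w, ¬ y < a := fun y hy hya =>
      Finset.eq_empty_iff_forall_notMem.1 hT y (hmemT y hy hya)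
    rw [Multiset.countP_eq_zero.2 fun y hy => hlt y (Multiset.mem_add.2 (.inl hy)),
      Multiset.countP_eq_zero.2 fun y hy => hlt y (Multiset.mem_add.2 (.inr hy))]
  · have hiff : ∀ y ∈ v + w, y < a ↔ y ≤ T.max' hT := fun y hy =>
      ⟨fun hya => T.le_max' y (hmemT y hy hya), fun hyb => hyb.trans_lt
        (Multiset.mem_filter.1 (Multiset.mem_toFinset.1 (T.max'_mem hT))).2⟩
    rw [Multiset.countP_congr rfl fun y hy => propext (hiff y (Multiset.mem_add.2 (.inl hy))),
      Multiset.countP_congr rfl fun y hy => propext (hiff y (Multiset.mem_add.2 (.inr hy)))]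
    exact congrFun h _

theorem countP_le_eq_countP_lt_add_count (z : Multiset α) (a : α) :
    z.countP (· ≤ a) = z.countP (· < a) + z.count a := by
  induction z using Multiset.induction with
  | empty => simp
  | cons b z ih =>
    simp only [Multiset.countP_cons, Multiset.count_cons, ih]
    rcases lt_trichotomy b a with hba | rfl | hab
    · simp [hba, hba.le, hba.ne']; omega
    · simp; omega
    · simp [hab.not_ge, hab.not_gt, hab.ne]

theorem cumCount_injective : Function.Injective (cumCount : Multiset α → α → ℕ) := by
  intro v w h
  ext a
  have hle := congrFun h a
  rw [cumCount_apply, cumCount_apply, countP_le_eq_countP_lt_add_count,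
    countP_le_eq_countP_lt_add_count, countP_lt_eq_of_cumCount_eq h a] at hle
  exact Nat.add_left_cancel hle

theorem cumCount_sortPair (v w : Multiset α) (x : α) :
    cumCount (sortPair v w).1 x = (cumCount (v + w) x + 1) / 2 ∧
      cumCount (sortPair v w).2 x = cumCount (v + w) x / 2 := by
  have hsorted : ((v + w).sort (· ≤ ·)).countP (· ≤ x) = cumCount (v + w) x := by
    rw [cumCount_apply, ← Multiset.coe_countP, Multiset.sort_eq]
  rw [← hsorted]
  exact altSplit_countP (· ≤ x) (fun _ _ hab hb => hab.trans hb) (Multiset.pairwise_sort _ _)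

theorem sortPair_comm (v w : Multiset α) : sortPair v w = sortPair w v := by
  rw [sortPair, sortPair, add_comm]

theorem sortPair_fst_add_snd (v w : Multiset α) : (sortPair v w).1 + (sortPair v w).2 = v + w :=
  cumCount_injective <| funext fun x => by
    have := cumCount_sortPair v w x
    simp only [map_add, Pi.add_apply] at this ⊢
    omega

theorem add_eq_add_of_sortPair_eq {v w v' w' : Multiset α} (h : sortPair v w = (v', w')) :
    v' + w' = v + w := by
  rw [← sortPair_fst_add_snd v w, h]

theorem isSortedPair_iff_cumCount {v w : Multiset α} :
    IsSortedPair v w ↔ ∀ x, cumCount w x ≤ cumCount v x ∧ cumCount v x ≤ cumCount w x + 1 := by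
  simp only [IsSortedPair, Prod.ext_iff, ← cumCount_injective.eq_iff, funext_iff,
    ← forall_and]
  refine forall_congr' fun x => ?_
  have := cumCount_sortPair v w x
  simp only [map_add, Pi.add_apply] at this
  omega

theorem isSortedPair_of_sortPair_fst_eq {v w : Multiset α} (h : (sortPair v w).1 = v) :
    IsSortedPair v w := by
  have hsum := sortPair_fst_add_snd v w
  rw [h] at hsum
  exact Prod.ext h (add_left_cancel hsum)

theorem cumCount_sortPair_of_close {v w : Multiset α}
    (hclose : ∀ x, cumCount v x ≤ cumCount w x + 1 ∧ cumCount w x ≤ cumCount v x + 1) :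
    cumCount (sortPair v w).1 = cumCount v ⊔ cumCount w ∧
      cumCount (sortPair v w).2 = cumCount v ⊓ cumCount w := by
  simp only [funext_iff, Pi.sup_apply, Pi.inf_apply, ← forall_and]
  intro x
  have := cumCount_sortPair v w x
  have := hclose x
  simp only [map_add, Pi.add_apply] at *
  omega

end Sorting

section PairwiseSorted

variable {α : Type*} [LinearOrder α]

def IsPairwiseSorted (M : Multiset (Multiset α)) : Prop :=
  ∀ v ∈ M, ∀ w ∈ M.erase v, IsSortedPair v w ∨ IsSortedPair w v

theorem IsPairwiseSorted.mono {M N : Multiset (Multiset α)} (hM : IsPairwiseSorted M)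
    (hNM : N ≤ M) : IsPairwiseSorted N := fun v hv w hw =>
  hM v (Multiset.mem_of_le hNM hv) w (Multiset.mem_of_le (Multiset.erase_le_erase v hNM) hw)

theorem IsPairwiseSorted.exists_forall_isSortedPair {M : Multiset (Multiset α)}
    (hM : IsPairwiseSorted M) (hne : M ≠ 0) : ∃ v ∈ M, ∀ w ∈ M.erase v, IsSortedPair v w := by
  classical
  obtain ⟨v, hvM, hmax⟩ := M.toFinset.exists_maximalFor cumCount
    (Multiset.toFinset_nonempty.2 hne)
  rw [Multiset.mem_toFinset] at hvM
  refine ⟨v, hvM, fun w hw => (hM v hvM w hw).elim id fun hwv => ?_⟩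
  have hvw := isSortedPair_iff_cumCount.1 hwv
  have hle : cumCount w ≤ cumCount v :=
    hmax (Multiset.mem_toFinset.2 (Multiset.mem_of_mem_erase hw)) fun x => (hvw x).1
  exact isSortedPair_iff_cumCount.2 fun x => ⟨hle x, (hvw x).1.trans (Nat.le_succ _)⟩

theorem cumCount_eq_of_forall_isSortedPair {M : Multiset (Multiset α)} {v : Multiset α}
    (hv : v ∈ M) (hsorted : ∀ w ∈ M.erase v, IsSortedPair v w) (x : α) :
    cumCount v x = (cumCount M.sum x + Multiset.card M - 1) / Multiset.card M := by
  set N := M.erase v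
  have hcard : Multiset.card M = Multiset.card N + 1 := by
    rw [← Multiset.card_cons, Multiset.cons_erase hv]
  have hsum : cumCount M.sum x = cumCount v x + (N.map (cumCount · x)).sum := by
    rw [← Multiset.cons_erase hv, Multiset.sum_cons, map_add, Pi.add_apply]
    exact congrArg _ (map_multiset_sum ((Pi.evalAddMonoidHom _ x).comp cumCount) N)
  have hupper : (N.map (cumCount · x)).sum ≤ Multiset.card N * cumCount v x := by
    simpa using Multiset.sum_map_le_sum_map (s := N) _ (fun _ => cumCount v x)
      fun w hw => ((isSortedPair_iff_cumCount.1 (hsorted w hw)) x).1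
  have hlower :
      Multiset.card N * cumCount v x ≤ (N.map (cumCount · x)).sum + Multiset.card N := by
    simpa [Multiset.sum_map_add] using Multiset.sum_map_le_sum_map (s := N)
      (fun _ => cumCount v x) (cumCount · x + 1)
      fun w hw => ((isSortedPair_iff_cumCount.1 (hsorted w hw)) x).2
  rw [hcard, hsum, Nat.add_sub_assoc (Nat.le_add_left 1 _), Nat.add_sub_cancel]
  symm
  apply Nat.div_eq_of_lt_le <;> linarith

theorem IsPairwiseSorted.eq_of_sum_eq {M M' : Multiset (Multiset α)} (hM : IsPairwiseSorted M)
    (hM' : IsPairwiseSorted M') (hcard : Multiset.card M = Multiset.card M')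
    (hsum : M.sum = M'.sum) : M = M' := by
  induction h : Multiset.card M generalizing M M' with
  | zero => rw [Multiset.card_eq_zero.1 h, Multiset.card_eq_zero.1 (hcard.symm.trans h)]
  | succ q ih =>
    obtain ⟨v, hv, hvsorted⟩ := hM.exists_forall_isSortedPair (by rintro rfl; simp at h)
    obtain ⟨v', hv', hv'sorted⟩ := hM'.exists_forall_isSortedPair
      (by rintro rfl; rw [Multiset.card_zero] at hcard; omega)
    have hvv' : v = v' := cumCount_injective <| funext fun x => by
      rw [cumCount_eq_of_forall_isSortedPair hv hvsorted,
        cumCount_eq_of_forall_isSortedPair hv' hv'sorted, hsum, hcard]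
    subst hvv'
    rw [← Multiset.cons_erase hv, ← Multiset.cons_erase hv']
    congr 1
    refine ih (hM.mono (Multiset.erase_le v M)) (hM'.mono (Multiset.erase_le v M')) ?_ ?_ ?_
    · simp [Multiset.card_erase_of_mem hv, Multiset.card_erase_of_mem hv', hcard]
    · rw [← add_right_inj v, ← Multiset.sum_cons, ← Multiset.sum_cons, Multiset.cons_erase hv,
        Multiset.cons_erase hv', hsum]
    · rw [Multiset.card_erase_of_mem hv, h]; rfl

end PairwiseSorted

section SortingMeasure

theorem half_sq_add_half_sq_le (a b : ℕ) :
    ((a + b + 1) / 2) ^ 2 + ((a + b) / 2) ^ 2 ≤ a ^ 2 + b ^ 2 := by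
  obtain ⟨k, hk | hk⟩ : ∃ k, a + b = 2 * k ∨ a + b = 2 * k + 1 := ⟨(a + b) / 2, by omega⟩
  · rw [show (a + b + 1) / 2 = k by omega, show (a + b) / 2 = k by omega]
    nlinarith [sq_nonneg ((a : ℤ) - b)]
  · rw [show (a + b + 1) / 2 = k + 1 by omega, show (a + b) / 2 = k by omega]
    rcases Nat.lt_or_gt_of_ne (show a ≠ b by omega) with h | h <;> nlinarith

theorem half_sq_add_half_sq_lt {a b : ℕ} (h : a + 2 ≤ b ∨ b + 2 ≤ a) :
    ((a + b + 1) / 2) ^ 2 + ((a + b) / 2) ^ 2 < a ^ 2 + b ^ 2 := by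
  obtain ⟨k, hk | hk⟩ : ∃ k, a + b = 2 * k ∨ a + b = 2 * k + 1 := ⟨(a + b) / 2, by omega⟩
  · rw [show (a + b + 1) / 2 = k by omega, show (a + b) / 2 = k by omega]
    rcases h with h | h <;> nlinarith
  · rw [show (a + b + 1) / 2 = k + 1 by omega, show (a + b) / 2 = k by omega]
    rcases h with h | h <;> nlinarith

variable {α : Type*} [LinearOrder α] [Fintype α]

def cumCountSum (z : Multiset α) : ℕ := ∑ x, cumCount z x

def cumCountSqSum (z : Multiset α) : ℕ := ∑ x, cumCount z x ^ 2

theorem cumCountSum_add (v w : Multiset α) :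
    cumCountSum (v + w) = cumCountSum v + cumCountSum w := by
  simp [cumCountSum, Finset.sum_add_distrib]

theorem sum_map_cumCountSum_sq_le (M : Multiset (Multiset α)) :
    (M.map (cumCountSum · ^ 2)).sum ≤ cumCountSum M.sum ^ 2 := by
  induction M using Multiset.induction with
  | empty => simp
  | cons z M ih =>
    rw [Multiset.map_cons, Multiset.sum_cons, Multiset.sum_cons, cumCountSum_add, add_sq]
    linarith [Nat.zero_le (2 * cumCountSum z * cumCountSum M.sum)]

theorem cumCountSqSum_sortPair_lt {v w : Multiset α} {x : α}
    (hx : cumCount v x + 2 ≤ cumCount w x ∨ cumCount w x + 2 ≤ cumCount v x) :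
    cumCountSqSum (sortPair v w).1 + cumCountSqSum (sortPair v w).2 <
      cumCountSqSum v + cumCountSqSum w := by
  simp only [cumCountSqSum, ← Finset.sum_add_distrib, (cumCount_sortPair v w _).1,
    (cumCount_sortPair v w _).2, map_add, Pi.add_apply]
  exact Finset.sum_lt_sum (fun y _ => half_sq_add_half_sq_le _ _)
    ⟨x, Finset.mem_univ x, half_sq_add_half_sq_lt hx⟩

theorem cumCountSqSum_sortPair_of_close {v w : Multiset α}
    (hclose : ∀ x, cumCount v x ≤ cumCount w x + 1 ∧ cumCount w x ≤ cumCount v x + 1) :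
    cumCountSqSum (sortPair v w).1 + cumCountSqSum (sortPair v w).2 =
      cumCountSqSum v + cumCountSqSum w := by
  simp only [cumCountSqSum, ← Finset.sum_add_distrib, (cumCount_sortPair_of_close hclose).1,
    (cumCount_sortPair_of_close hclose).2, Pi.sup_apply, Pi.inf_apply]
  refine Finset.sum_congr rfl fun x _ => ?_
  rcases le_total (cumCount v x) (cumCount w x) with h | h <;> simp [h, add_comm]

theorem cumCountSum_sq_lt_of_close {v w : Multiset α} (hvw : ¬IsSortedPair v w)
    (hwv : ¬IsSortedPair w v)
    (hclose : ∀ x, cumCount v x ≤ cumCount w x + 1 ∧ cumCount w x ≤ cumCount v x + 1) :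
    cumCountSum v ^ 2 + cumCountSum w ^ 2 <
      cumCountSum (sortPair v w).1 ^ 2 + cumCountSum (sortPair v w).2 ^ 2 := by
  have hsup := (cumCount_sortPair_of_close hclose).1
  have hv : cumCountSum v < cumCountSum (sortPair v w).1 := by
    refine Fintype.sum_strictMono (lt_of_le_of_ne (hsup ▸ le_sup_left) fun h => hvw ?_)
    exact isSortedPair_of_sortPair_fst_eq (cumCount_injective h.symm)
  have hw : cumCountSum w < cumCountSum (sortPair v w).1 := by
    refine Fintype.sum_strictMono (lt_of_le_of_ne (hsup ▸ le_sup_right) fun h => hwv ?_)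
    exact isSortedPair_of_sortPair_fst_eq (sortPair_comm v w ▸ cumCount_injective h.symm)
  have hsum := congrArg cumCountSum (sortPair_fst_add_snd v w)
  rw [cumCountSum_add, cumCountSum_add] at hsum
  nlinarith

-- The total `M.sum` is not changed by sorting, and it bounds `∑ cumCountSum²` (see
-- `sum_map_cumCountSum_sq_le`), so the second component falls as that sum of squares grows.
def sortingMeasure (M : Multiset (Multiset α)) : ℕ ×ₗ ℕ :=
  toLex ((M.map cumCountSqSum).sum, cumCountSum M.sum ^ 2 - (M.map (cumCountSum · ^ 2)).sum)

theorem sortingMeasure_sortPair_lt {v w : Multiset α} (hvw : ¬IsSortedPair v w)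
    (hwv : ¬IsSortedPair w v) (R : Multiset (Multiset α)) :
    sortingMeasure ((sortPair v w).1 ::ₘ (sortPair v w).2 ::ₘ R) <
      sortingMeasure (v ::ₘ w ::ₘ R) := by
  have hsum : ((sortPair v w).1 ::ₘ (sortPair v w).2 ::ₘ R).sum = (v ::ₘ w ::ₘ R).sum := by
    simp only [Multiset.sum_cons, ← add_assoc, sortPair_fst_add_snd]
  have hbound := sum_map_cumCountSum_sq_le ((sortPair v w).1 ::ₘ (sortPair v w).2 ::ₘ R)
  rw [hsum] at hbound
  simp only [sortingMeasure, Prod.Lex.toLex_lt_toLex, hsum]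
  simp only [Multiset.map_cons, Multiset.sum_cons] at hbound ⊢
  by_cases hfar : ∃ x, cumCount v x + 2 ≤ cumCount w x ∨ cumCount w x + 2 ≤ cumCount v x
  · obtain ⟨x, hx⟩ := hfar
    have := cumCountSqSum_sortPair_lt hx
    left; omega
  · have hclose : ∀ x, cumCount v x ≤ cumCount w x + 1 ∧ cumCount w x ≤ cumCount v x + 1 := by
      simp only [not_exists, not_or, not_le] at hfar
      exact fun x => by have := hfar x; omega
    have := cumCountSqSum_sortPair_of_close hclose
    have := cumCountSum_sq_lt_of_close hvw hwv hclose
    right; omega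

end SortingMeasure

theorem Module.Basis.ker_eq_span_sub {ι κ R V W : Type*} [Ring R] [AddCommGroup V] [Module R V]
    [AddCommGroup W] [Module R W] (b : Module.Basis ι R V) (f : V →ₗ[R] W) (g : ι → κ)
    {e : κ → W} (he : LinearIndependent R e) (hf : ∀ i, f (b i) = e (g i)) :
    LinearMap.ker f = Submodule.span R {x | ∃ i j, g i = g j ∧ x = b i - b j} := by
  classical
  refine le_antisymm (fun x hx => ?_) (Submodule.span_le.2 ?_)
  · rcases isEmpty_or_nonempty ι with hι | hι
    · rw [← b.linearCombination_repr x, Subsingleton.elim (b.repr x) 0, map_zero]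
      exact zero_mem _
    set r := Function.invFun g
    have hc : Finsupp.mapDomain g (b.repr x) = 0 := by
      refine linearIndependent_iff.1 he _ ?_
      rw [Finsupp.linearCombination_mapDomain, show e ∘ g = f ∘ b from funext (hf · |>.symm),
        ← Finsupp.apply_linearCombination, b.linearCombination_repr]
      exact hx
    have hx' : (b.repr x).sum (fun i a => a • (b i - b (r (g i)))) = x := by
      have hr := congrArg (Finsupp.linearCombination R (b ∘ r)) hc
      rw [Finsupp.linearCombination_mapDomain, map_zero, Finsupp.linearCombination_apply] at hr
      simp only [smul_sub, Finsupp.sum_sub]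
      rw [← Finsupp.linearCombination_apply, b.linearCombination_repr]
      simpa using hr
    rw [← hx']
    exact Submodule.sum_mem _ fun i _ => Submodule.smul_mem _ _
      (Submodule.subset_span ⟨i, r (g i), (Function.invFun_eq ⟨i, rfl⟩).symm, rfl⟩)
  · rintro _ ⟨i, j, hij, rfl⟩
    simp [hf, hij]

section Toric

variable {σ α : Type*}

noncomputable def toricMap (u : σ → Multiset α) (K : Type*) [CommRing K] :
    MvPolynomial σ K →ₐ[K] Polynomial (MvPolynomial α K) :=
  aeval fun i => Polynomial.C ((u i).map X).prod * Polynomial.X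

variable {K : Type*} [CommRing K]

theorem prod_map_X_eq_monomial [DecidableEq σ] (A : Multiset σ) :
    (A.map X).prod = (monomial (Multiset.toFinsupp A) 1 : MvPolynomial σ K) := by
  induction A using Multiset.induction with
  | empty => simp
  | cons i A ih =>
    rw [Multiset.map_cons, Multiset.prod_cons, ih, X, monomial_mul, one_mul,
      ← Multiset.singleton_add, Multiset.toFinsupp_add, Multiset.toFinsupp_singleton]

theorem linearIndependent_monomial_prod_map_X :
    LinearIndependent K fun p : Multiset α × ℕ =>
      Polynomial.monomial p.2 ((p.1.map X).prod : MvPolynomial α K) := by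
  classical
  have h := ((basisMonomials α K).smulTower
    (Polynomial.basisMonomials (MvPolynomial α K))).linearIndependent
  convert h.comp (Prod.map Multiset.toFinsupp id)
    (Multiset.toFinsupp.injective.prodMap Function.injective_id) with p
  simp [prod_map_X_eq_monomial, Polynomial.smul_monomial]

theorem toricMap_prod_map_X (u : σ → Multiset α) (A : Multiset σ) :
    toricMap u K (A.map X).prod =
      Polynomial.monomial (Multiset.card A) (((A.map u).sum.map X).prod) := by
  induction A using Multiset.induction with
  | empty => simp
  | cons i A ih =>
    rw [Multiset.map_cons, Multiset.prod_cons, map_mul, ih, toricMap, aeval_X,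
      Polynomial.C_mul_X_eq_monomial, Polynomial.monomial_mul_monomial]
    simp [add_comm]

theorem ker_toricMap (u : σ → Multiset α) :
    LinearMap.ker (toricMap u K).toLinearMap = Submodule.span K {f | ∃ A B : Multiset σ,
      Multiset.card A = Multiset.card B ∧ (A.map u).sum = (B.map u).sum ∧
        f = (A.map X).prod - (B.map X).prod} := by
  classical
  set b := (basisMonomials σ K).reindex Multiset.toFinsupp.toEquiv.symm
  have hb : ∀ A, b A = (A.map X).prod := fun A => by simp [b, prod_map_X_eq_monomial]
  rw [b.ker_eq_span_sub _
    (fun A => ((A.map u).sum, Multiset.card A)) linearIndependent_monomial_prod_map_X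
    fun A => by rw [hb]; exact toricMap_prod_map_X u A]
  simp only [hb, Prod.mk.injEq]
  congr! 3 with f
  tauto

variable [LinearOrder α]

def IsSortable (u : σ → Multiset α) : Prop :=
  ∀ i j, ∃ k l, sortPair (u i) (u j) = (u k, u l)

def sortingRelations (u : σ → Multiset α) (K : Type*) [CommRing K] : Set (MvPolynomial σ K) :=
  {f | ∃ i j k l, ¬IsSortedPair (u i) (u j) ∧ sortPair (u i) (u j) = (u k, u l) ∧
    f = X i * X j - X k * X l}

theorem sortingRelations_subset_ker (u : σ → Multiset α) :
    sortingRelations u K ⊆ RingHom.ker (toricMap u K) := by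
  rintro _ ⟨i, j, k, l, -, hkl, rfl⟩
  have hsum := add_eq_add_of_sortPair_eq hkl
  have hmem : X i * X j - X k * X l ∈ LinearMap.ker (toricMap u K).toLinearMap := by
    rw [ker_toricMap]
    exact Submodule.subset_span ⟨{i, j}, {k, l}, rfl, by simp [hsum], by simp⟩
  exact hmem

variable [Fintype α] {u : σ → Multiset α}

theorem exists_sortingMeasure_lt_of_not_isPairwiseSorted (hsort : IsSortable u)
    {C : Multiset σ} (hC : ¬IsPairwiseSorted (C.map u)) :
    ∃ C', sortingMeasure (C'.map u) < sortingMeasure (C.map u) ∧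
      Multiset.card C' = Multiset.card C ∧ (C'.map u).sum = (C.map u).sum ∧
      (C.map X).prod - (C'.map X).prod ∈ Ideal.span (sortingRelations u K) := by
  classical
  simp only [IsPairwiseSorted, not_forall, not_or, exists_prop] at hC
  obtain ⟨_, hv, _, hw, hvw, hwv⟩ := hC
  obtain ⟨i, hi, rfl⟩ := Multiset.mem_map.1 hv
  rw [← Multiset.map_erase_of_mem _ _ hi] at hw
  obtain ⟨j, hj, rfl⟩ := Multiset.mem_map.1 hw
  obtain ⟨k, l, hkl⟩ := hsort i j
  set R := (C.erase i).erase j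
  have hC : C = i ::ₘ j ::ₘ R := by rw [Multiset.cons_erase hj, Multiset.cons_erase hi]
  refine ⟨k ::ₘ l ::ₘ R, ?_, ?_, ?_, ?_⟩
  · have := sortingMeasure_sortPair_lt hvw hwv (R.map u)
    rw [hkl] at this
    rw [hC]
    simpa only [Multiset.map_cons] using this
  · simp [hC]
  · rw [hC]
    simp only [Multiset.map_cons, Multiset.sum_cons, ← add_assoc, add_eq_add_of_sortPair_eq hkl]
  · have : ((C.map X).prod : MvPolynomial σ K) - ((k ::ₘ l ::ₘ R).map X).prod =
        (X i * X j - X k * X l) * (R.map X).prod := by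
      rw [hC]; simp only [Multiset.map_cons, Multiset.prod_cons]; ring
    rw [this]
    exact Ideal.mul_mem_right _ _ (Ideal.subset_span ⟨i, j, k, l, hvw, hkl, rfl⟩)

theorem exists_isPairwiseSorted_sub_mem_span (hsort : IsSortable u) (C : Multiset σ) :
    ∃ C', IsPairwiseSorted (C'.map u) ∧ Multiset.card C' = Multiset.card C ∧
      (C'.map u).sum = (C.map u).sum ∧
      (C.map X).prod - (C'.map X).prod ∈ Ideal.span (sortingRelations u K) := by
  induction C using
    (InvImage.wf (fun C : Multiset σ => sortingMeasure (C.map u)) wellFounded_lt).induction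
  rename_i C ih
  by_cases hC : IsPairwiseSorted (C.map u)
  · exact ⟨C, hC, rfl, rfl, by simp⟩
  · obtain ⟨C', hlt, hcard, hsum, hmem⟩ :=
      exists_sortingMeasure_lt_of_not_isPairwiseSorted (K := K) hsort hC
    obtain ⟨C'', hC'', hcard', hsum', hmem'⟩ := ih C' hlt
    refine ⟨C'', hC'', hcard'.trans hcard, hsum'.trans hsum, ?_⟩
    rw [← sub_add_sub_cancel _ (C'.map X).prod]
    exact add_mem hmem hmem'

theorem prod_map_X_sub_mem_span_sortingRelations (hinj : Function.Injective u)
    (hsort : IsSortable u) {A B : Multiset σ}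
    (hcard : Multiset.card A = Multiset.card B) (hsum : (A.map u).sum = (B.map u).sum) :
    (A.map X).prod - (B.map X).prod ∈ Ideal.span (sortingRelations u K) := by
  obtain ⟨A', hA', hcardA, hsumA, hmemA⟩ := exists_isPairwiseSorted_sub_mem_span (K := K) hsort A
  obtain ⟨B', hB', hcardB, hsumB, hmemB⟩ := exists_isPairwiseSorted_sub_mem_span (K := K) hsort B
  obtain rfl : A' = B' := Multiset.map_injective hinj <| hA'.eq_of_sum_eq hB'
    (by simp [hcardA, hcardB, hcard]) (by rw [hsumA, hsumB, hsum])
  rw [← sub_sub_sub_cancel_right _ _ (A'.map X).prod]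
  exact sub_mem hmemA hmemB

end Toric

/-- let `B = {u_1,…,u_m}` be a finite sortable set of monomials in
`S = K[x_1,…,x_n]` and `φ : K[y_1,…,y_m] → S[t]`, `φ(y_i) = u_i t`.  Then `ker φ` is
generated by the binomials `y_i y_j − y_k y_l` over all unsorted pairs `(u_i, u_j)` with
`sort(u_i, u_j) = (u_k, u_l)`. -/
theorem toric_ideal_of_sortable_generated_by_sorting_relations
    (n m : ℕ) (K : Type*) [Field K]
    (u : Fin m → Multiset (Fin n)) (hinj : Function.Injective u)
    (hsort : ∀ i j : Fin m, ∃ k l : Fin m, sortPair (u i) (u j) = (u k, u l))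
    (φ : MvPolynomial (Fin m) K →ₐ[K] Polynomial (MvPolynomial (Fin n) K))
    (hφ : φ = MvPolynomial.aeval (fun i : Fin m =>
      Polynomial.C (((u i).map MvPolynomial.X).prod) * Polynomial.X)) :
    RingHom.ker φ =
      Ideal.span { f : MvPolynomial (Fin m) K |
        ∃ i j k l : Fin m, ¬ IsSortedPair (u i) (u j) ∧
          sortPair (u i) (u j) = (u k, u l) ∧
          f = X i * X j - X k * X l } := by
  subst hφ
  refine le_antisymm (fun f hf => ?_) (Ideal.span_le.2 (sortingRelations_subset_ker u))
  have hf' : f ∈ LinearMap.ker (toricMap u K).toLinearMap := hf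
  rw [ker_toricMap] at hf'
  refine (Submodule.span_le (p := (Ideal.span (sortingRelations u K)).restrictScalars K)).2
    ?_ hf'
  rintro _ ⟨A, B, hcard, hsum, rfl⟩
  exact prod_map_X_sub_mem_span_sortingRelations hinj hsort hcard hsum
end

section
/- Let G be a proper interval graph on vertex set [n] = {1,…,n} and let C_1 and C_2 be minimal vertex covers of G. List the multiset union of C_1 and C_2 (so that each element of C_1 ∩ C_2 occurs twice) in increasing order as i_1 ≤ i_2 ≤ ⋯ ≤ i_k, and set D_1 = {i_ℓ : ℓ odd, 1 ≤ ℓ ≤ k} and D_2 = {i_ℓ : ℓ even, 1 ≤ ℓ ≤ k}. Then D_1 and D_2 are minimal vertex covers of G. (Equivalently, the vertex cover ideal I_G is a sortable ideal: sort(x_{C_1}, x_{C_2}) = (x_{D_1}, x_{D_2}) is again a pair of minimal generators of I_G.) -/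
/-- `C` is a vertex cover of the graph `G`: it meets every edge. -/
def IsVertexCover {W : Type*} (G : SimpleGraph W) (C : Finset W) : Prop :=
  ∀ a b : W, G.Adj a b → a ∈ C ∨ b ∈ C

/-- `C` is a minimal vertex cover of `G`: it is a vertex cover and no proper subset of `C`
is a vertex cover. -/
def IsMinVertexCover {W : Type*} (G : SimpleGraph W) (C : Finset W) : Prop :=
  IsVertexCover G C ∧ ∀ D : Finset W, D ⊆ C → IsVertexCover G D → D = C

/-- `G` is a proper interval graph (with respect to the labeling of its vertices by `Fin n`):
for all `i < j` with `{i,j}` an edge, the induced subgraph on `{i, i+1, …, j}` is complete. -/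
def IsProperInterval {n : ℕ} (G : SimpleGraph (Fin n)) : Prop :=
  ∀ i j : Fin n, i < j → G.Adj i j →
    ∀ a b : Fin n, i ≤ a → a ≤ j → i ≤ b → b ≤ j → a ≠ b → G.Adj a b

/-!
Put `s = C₁ + C₂` (multiplicities at most two) and let `c x` be the number of entries of `s`
below `x`. A vertex of multiplicity two lies in both halves of `sort(C₁, C₂)`; a vertex of
multiplicity one lies in the first or the second half according to the parity of `c x`. If
`a < b` have multiplicity one and everything strictly between them multiplicity two, then
`c a` and `c b` have different parities.

For an edge `a < b` the interval `[a, b]` is a clique, so every vertex strictly between lies in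
both covers; if neither `a` nor `b` were in a half, both would have multiplicity one and the
same parity. If all neighbours of `v` lay in a half, so would the closed neighbourhood of `v`,
an interval containing a vertex outside `C₁` and one outside `C₂`; between two consecutive
vertices of multiplicity one in it the parity flips, which is impossible inside one half.
-/

section SortHalf

variable {α : Type*} [LinearOrder α]

theorem mem_altSplit_iff_of_pairwise {l : List α} (hl : l.Pairwise (· ≤ ·)) (x : α) :
    (x ∈ (altSplit l).1 ↔ 2 ≤ l.count x ∨ (l.count x = 1 ∧ l.countP (· < x) % 2 = 0)) ∧
    (x ∈ (altSplit l).2 ↔ 2 ≤ l.count x ∨ (l.count x = 1 ∧ l.countP (· < x) % 2 = 1)) := by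
  induction l with
  | nil => simp [altSplit]
  | cons a t ih =>
    obtain ⟨ha, ht⟩ := List.pairwise_cons.mp hl
    obtain ⟨ih₁, ih₂⟩ := ih ht
    simp only [altSplit, List.mem_cons, ih₁, ih₂]
    rcases lt_trichotomy x a with hxa | rfl | hax
    · have hc : t.count x = 0 := List.count_eq_zero.mpr fun hx => (ha x hx).not_gt hxa
      simp [List.count_cons_of_ne hxa.ne', hc, hxa.ne]
    · have hc : t.countP (· < x) = 0 :=
        List.countP_eq_zero.mpr fun y hy => by simpa using ha y hy
      rw [List.count_cons_self, List.countP_cons_of_neg (by simp), hc]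
      simp only [true_or, true_iff, and_true]
      omega
    · rw [List.count_cons_of_ne hax.ne, List.countP_cons_of_pos (by simpa)]
      simp only [hax.ne', false_or]
      omega

theorem Multiset.countP_lt_eq_of_lt (s : Multiset α) {a b : α} (hab : a < b) :
    s.countP (· < b) = s.countP (· < a) + s.count a + s.countP (fun z => a < z ∧ z < b) := by
  induction s using Multiset.induction with
  | empty => simp
  | cons z s ih =>
    simp only [Multiset.countP_cons, Multiset.count_cons, ih]
    split_ifs <;> grind

theorem Multiset.countP_lt_mod_two_ne (s : Multiset α) {a b : α} (hab : a < b)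
    (ha : s.count a = 1) (hmid : ∀ z, a < z → z < b → 2 ∣ s.count z) :
    s.countP (· < b) % 2 ≠ s.countP (· < a) % 2 := by
  obtain ⟨u, hu⟩ := (s.filter fun z => a < z ∧ z < b).exists_smul_of_dvd_count fun z hz => by
    rw [Multiset.count_filter_of_pos (Multiset.of_mem_filter hz)]
    exact hmid z (Multiset.of_mem_filter hz).1 (Multiset.of_mem_filter hz).2
  rw [s.countP_lt_eq_of_lt hab, ha, Multiset.countP_eq_card_filter (fun z => a < z ∧ z < b), hu,
    Multiset.card_nsmul]
  omega

/-- `D` is the set of entries in odd (`e = 0`) or even (`e = 1`) positions of the sorted list of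
`s`: an entry `x` occupies the positions `c + 1, …, c + s.count x`, where `c` counts the
entries below `x`. -/
def IsSortHalf (s : Multiset α) (e : ℕ) (D : Finset α) : Prop :=
  ∀ x, x ∈ D ↔ 2 ≤ s.count x ∨ (s.count x = 1 ∧ s.countP (· < x) % 2 = e)

theorem isSortHalf_altSplit_sort (s : Multiset α) :
    IsSortHalf s 0 (altSplit (s.sort (· ≤ ·))).1.toFinset ∧
      IsSortHalf s 1 (altSplit (s.sort (· ≤ ·))).2.toFinset := by
  have hs := s.sort_eq (· ≤ ·)
  have h := mem_altSplit_iff_of_pairwise (s.pairwise_sort (· ≤ ·))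
  refine ⟨fun x => ?_, fun x => ?_⟩
  · rw [List.mem_toFinset, (h x).1, ← Multiset.coe_count, ← Multiset.coe_countP, hs]
  · rw [List.mem_toFinset, (h x).2, ← Multiset.coe_count, ← Multiset.coe_countP, hs]

theorem IsSortHalf.not_Icc_subset {s : Multiset α} {e : ℕ} {D : Finset α}
    (hD : IsSortHalf s e D) (hs : ∀ z, s.count z ≤ 2) {x y : α} (hxy : x < y)
    (hx : s.count x = 1) (hy : s.count y = 1) : ¬ Set.Icc x y ⊆ D := by
  intro hsub
  -- `y'` is the first vertex of multiplicity one after `x`.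
  let S := s.toFinset.filter fun z => x < z ∧ z ≤ y ∧ s.count z = 1
  have hyS : y ∈ S := Finset.mem_filter.mpr
    ⟨Multiset.mem_toFinset.mpr (Multiset.count_pos.mp (by omega)), hxy, le_rfl, hy⟩
  set y' := S.min' ⟨y, hyS⟩
  obtain ⟨-, hxy', hy'y, hy'⟩ : y' ∈ s.toFinset ∧ x < y' ∧ y' ≤ y ∧ s.count y' = 1 := by
    simpa [S] using S.min'_mem ⟨y, hyS⟩
  have hmid : ∀ z, x < z → z < y' → 2 ∣ s.count z := by
    intro z hxz hzy'
    have hz1 : s.count z ≠ 1 := fun hz1 => (S.min'_le z (Finset.mem_filter.mpr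
      ⟨Multiset.mem_toFinset.mpr (Multiset.count_pos.mp (by omega)), hxz,
        (hzy'.trans_le hy'y).le, hz1⟩)).not_gt hzy'
    have hzD := (hD z).1 (hsub ⟨hxz.le, (hzy'.trans_le hy'y).le⟩)
    have := hs z
    exact ⟨1, by omega⟩
  have hne := s.countP_lt_mod_two_ne hxy' hx hmid
  have hxD := (hD x).1 (hsub ⟨le_rfl, hxy.le⟩)
  have hy'D := (hD y').1 (hsub ⟨hxy'.le, hy'y⟩)
  omega

end SortHalf

theorem Finset.count_val_le_one {α : Type*} [DecidableEq α] (C : Finset α) (x : α) :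
    C.val.count x ≤ 1 :=
  Multiset.nodup_iff_count_le_one.1 C.nodup x

section VertexCover

variable {W : Type*} {G : SimpleGraph W} {C : Finset W}

theorem isMinVertexCover_iff :
    IsMinVertexCover G C ↔ IsVertexCover G C ∧ ∀ v ∈ C, ∃ w, G.Adj v w ∧ w ∉ C := by
  classical
  refine ⟨fun h => ⟨h.1, fun v hv => ?_⟩, fun ⟨hC, h⟩ => ⟨hC, fun D hDC hD => ?_⟩⟩
  · by_contra! hN
    have hcov : IsVertexCover G (C.erase v) := by
      intro a b hab
      rcases eq_or_ne a v with rfl | hav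
      · exact .inr (Finset.mem_erase.mpr ⟨(G.ne_of_adj hab).symm, hN b hab⟩)
      rcases eq_or_ne b v with rfl | hbv
      · exact .inl (Finset.mem_erase.mpr ⟨G.ne_of_adj hab, hN a hab.symm⟩)
      exact (h.1 a b hab).imp (Finset.mem_erase.mpr ⟨hav, ·⟩) (Finset.mem_erase.mpr ⟨hbv, ·⟩)
    have hvC := C.notMem_erase v
    rw [h.2 _ (C.erase_subset v) hcov] at hvC
    exact hvC hv
  · refine hDC.antisymm fun v hv => ?_
    obtain ⟨w, hvw, hw⟩ := h v hv
    exact (hD v w hvw).resolve_right fun hwD => hw (hDC hwD)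

theorem IsVertexCover.one_le_count_add_count [DecidableEq W] (hC : IsVertexCover G C)
    {x y : W} (h : G.Adj x y) : 1 ≤ C.val.count x + C.val.count y := by
  rcases hC x y h with hx | hy
  · have := Multiset.one_le_count_iff_mem.mpr hx
    omega
  · have := Multiset.one_le_count_iff_mem.mpr hy
    omega

end VertexCover

section ProperInterval

variable {n : ℕ} {G : SimpleGraph (Fin n)}

theorem IsProperInterval.adj_of_lt_of_lt (hG : IsProperInterval G) {a b z : Fin n}
    (h : G.Adj a b) (haz : a < z) (hzb : z < b) : G.Adj a z ∧ G.Adj z b :=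
  ⟨hG a b (haz.trans hzb) h a z le_rfl (haz.trans hzb).le haz.le hzb.le haz.ne,
    hG a b (haz.trans hzb) h z b haz.le hzb.le (haz.trans hzb).le le_rfl hzb.ne⟩

theorem IsProperInterval.eq_or_adj_of_le_of_le (hG : IsProperInterval G) {v x y z : Fin n}
    (hx : x = v ∨ G.Adj v x) (hy : y = v ∨ G.Adj v y) (hxz : x ≤ z) (hzy : z ≤ y) :
    z = v ∨ G.Adj v z := by
  rcases lt_trichotomy z v with hzv | rfl | hvz
  · have hxv := hxz.trans_lt hzv
    have hadj := hx.resolve_left hxv.ne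
    exact .inr (hG x v hxv hadj.symm z v hxz hzv.le hxv.le le_rfl hzv.ne).symm
  · exact .inl rfl
  · have hvy := hvz.trans_le hzy
    have hadj := hy.resolve_left hvy.ne'
    exact .inr (hG v y hvy hadj v z le_rfl hvy.le hvz.le hzy hvz.ne)

variable {C₁ C₂ D : Finset (Fin n)} {e : ℕ}

theorem IsSortHalf.isVertexCover (hG : IsProperInterval G) (h₁ : IsVertexCover G C₁)
    (h₂ : IsVertexCover G C₂) (hD : IsSortHalf (C₁.val + C₂.val) e D) (he : e < 2) :
    IsVertexCover G D := by
  suffices h : ∀ a b, a < b → G.Adj a b → a ∈ D ∨ b ∈ D by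
    intro a b hab
    rcases (G.ne_of_adj hab).lt_or_gt with hlt | hgt
    exacts [h a b hlt hab, (h b a hgt hab.symm).symm]
  intro a b hab hadj
  by_contra! ⟨ha, hb⟩
  have ha' := (hD a).not.1 ha
  have hb' := (hD b).not.1 hb
  simp only [Multiset.count_add] at ha' hb'
  have hab₁ := h₁.one_le_count_add_count hadj
  have hab₂ := h₂.one_le_count_add_count hadj
  have ha1 : (C₁.val + C₂.val).count a = 1 := by
    rw [Multiset.count_add]
    omega
  have hmid : ∀ z, a < z → z < b → 2 ∣ (C₁.val + C₂.val).count z := by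
    intro z haz hzb
    obtain ⟨hza, hzb⟩ := hG.adj_of_lt_of_lt hadj haz hzb
    have := h₁.one_le_count_add_count hza
    have := h₁.one_le_count_add_count hzb
    have := h₂.one_le_count_add_count hza
    have := h₂.one_le_count_add_count hzb
    have := C₁.count_val_le_one z
    have := C₂.count_val_le_one z
    exact ⟨1, by rw [Multiset.count_add]; omega⟩
  have hne := (C₁.val + C₂.val).countP_lt_mod_two_ne hab ha1 hmid
  omega

theorem IsSortHalf.exists_adj_notMem (hG : IsProperInterval G) (h₁ : IsMinVertexCover G C₁)
    (h₂ : IsMinVertexCover G C₂) (hD : IsSortHalf (C₁.val + C₂.val) e D) {v : Fin n}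
    (hv : v ∈ D) : ∃ w, G.Adj v w ∧ w ∉ D := by
  by_contra! hN
  have hND : ∀ z, z = v ∨ G.Adj v z → z ∈ D := by
    rintro z (rfl | hz)
    exacts [hv, hN z hz]
  have hout : ∀ C, IsMinVertexCover G C → ∃ x, (x = v ∨ G.Adj v x) ∧ x ∉ C := by
    intro C hC
    by_cases hvC : v ∈ C
    · obtain ⟨w, hw, hwC⟩ := (isMinVertexCover_iff.1 hC).2 v hvC
      exact ⟨w, .inr hw, hwC⟩
    · exact ⟨v, .inl rfl, hvC⟩
  obtain ⟨x, hx, hx₁⟩ := hout C₁ h₁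
  obtain ⟨y, hy, hy₂⟩ := hout C₂ h₂
  have hpos : ∀ z ∈ D, 1 ≤ (C₁.val + C₂.val).count z := fun z hz => by
    rcases (hD z).1 hz with h | ⟨h, -⟩ <;> omega
  have hx1 : (C₁.val + C₂.val).count x = 1 := by
    have hpx := hpos x (hND x hx)
    have := C₂.count_val_le_one x
    rw [Multiset.count_add, Multiset.count_eq_zero_of_notMem hx₁] at hpx ⊢
    omega
  have hy1 : (C₁.val + C₂.val).count y = 1 := by
    have hpy := hpos y (hND y hy)
    have := C₁.count_val_le_one y
    rw [Multiset.count_add, Multiset.count_eq_zero_of_notMem hy₂] at hpy ⊢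
    omega
  have hxy : x ≠ y := by
    rintro rfl
    rw [Multiset.count_add, Multiset.count_eq_zero_of_notMem hx₁,
      Multiset.count_eq_zero_of_notMem hy₂] at hx1
    omega
  have hs : ∀ z, (C₁.val + C₂.val).count z ≤ 2 := fun z => by
    have := C₁.count_val_le_one z
    have := C₂.count_val_le_one z
    rw [Multiset.count_add]
    omega
  rcases hxy.lt_or_gt with hlt | hgt
  · exact hD.not_Icc_subset hs hlt hx1 hy1 fun z hz =>
      hND z (hG.eq_or_adj_of_le_of_le hx hy hz.1 hz.2)
  · exact hD.not_Icc_subset hs hgt hy1 hx1 fun z hz =>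
      hND z (hG.eq_or_adj_of_le_of_le hy hx hz.1 hz.2)

theorem IsSortHalf.isMinVertexCover (hG : IsProperInterval G) (h₁ : IsMinVertexCover G C₁)
    (h₂ : IsMinVertexCover G C₂) (hD : IsSortHalf (C₁.val + C₂.val) e D) (he : e < 2) :
    IsMinVertexCover G D :=
  isMinVertexCover_iff.2 ⟨hD.isVertexCover hG h₁.1 h₂.1 he,
    fun _ hv => hD.exists_adj_notMem hG h₁ h₂ hv⟩

end ProperInterval

/-- Theorem 2.1: let `G` be a proper interval graph on `[n]` and `C_1, C_2`
minimal vertex covers of `G`.  List the multiset union of `C_1` and `C_2` in increasing order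
as `i_1 ≤ i_2 ≤ ⋯ ≤ i_k` and let `D_1 = {i_ℓ : ℓ odd}`, `D_2 = {i_ℓ : ℓ even}`.  Then
`D_1` and `D_2` are minimal vertex covers of `G`; equivalently, the vertex cover ideal of `G`
is sortable: `sort(x_{C_1}, x_{C_2}) = (x_{D_1}, x_{D_2})` is again a pair of minimal
generators. -/
theorem cover_ideal_of_properInterval_sortable (n : ℕ) (G : SimpleGraph (Fin n))
    (hG : IsProperInterval G) (C₁ C₂ : Finset (Fin n))
    (h₁ : IsMinVertexCover G C₁) (h₂ : IsMinVertexCover G C₂)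
    (l : List (Fin n)) (hl : l = Multiset.sort (C₁.val + C₂.val) (· ≤ ·))
    (D₁ D₂ : Finset (Fin n))
    (hD₁ : D₁ = ((altSplit l).1).toFinset) (hD₂ : D₂ = ((altSplit l).2).toFinset) :
    IsMinVertexCover G D₁ ∧ IsMinVertexCover G D₂ := by
  subst hl hD₁ hD₂
  obtain ⟨hs₁, hs₂⟩ := isSortHalf_altSplit_sort (C₁.val + C₂.val)
  exact ⟨hs₁.isMinVertexCover hG h₁ h₂ two_pos, hs₂.isMinVertexCover hG h₁ h₂ one_lt_two⟩
end

section
/- Let G be a proper interval graph on vertex set [n] = {1,…,n} and let C_1 and C_2 be minimal vertex covers of G. List the multiset union of C_1 and C_2 (so that each element of C_1 ∩ C_2 occurs twice) in increasing order as i_1 ≤ i_2 ≤ ⋯ ≤ i_k, and set D_1 = {i_ℓ : ℓ odd, 1 ≤ ℓ ≤ k} and D_2 = {i_ℓ : ℓ even, 1 ≤ ℓ ≤ k}. Then D_1 and D_2 are vertex covers of G (not necessarily minimal a priori). -/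
/-! For an edge `a < b`: if `a` or `b` lies in both covers, its two copies are adjacent in the
sorted list and so land in different halves. Otherwise `a` and `b` each lie in exactly one
cover, and every vertex strictly between them is adjacent to both, hence lies in both covers.
So an even number of entries separate `a` from `b` in the sorted list, and they go to
different halves. -/

open Finset

section AltSplit

variable {α : Type*} [LinearOrder α]

/-- In a sorted list the first occurrence of `v` has index `l.countP (· < v)`. -/
theorem mem_altSplit_of_pairwise {l : List α} (hl : l.Pairwise (· ≤ ·)) {v : α} (hv : v ∈ l) :
    (Even (l.countP (· < v)) → v ∈ (altSplit l).1) ∧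
      (Odd (l.countP (· < v)) → v ∈ (altSplit l).2) := by
  induction l with
  | nil => simp at hv
  | cons a t ih =>
    obtain ⟨ha, ht⟩ := List.pairwise_cons.mp hl
    rcases eq_or_ne a v with rfl | hav
    · have hcount : (a :: t).countP (· < a) = 0 := by
        simpa [List.countP_eq_zero] using fun x hx => ha x hx
      simp [hcount, altSplit]
    · have hvt : v ∈ t := (List.mem_cons.mp hv).resolve_left hav.symm
      have hlt : a < v := (ha v hvt).lt_of_ne hav
      obtain ⟨ih₁, ih₂⟩ := ih ht hvt
      simp only [altSplit, List.countP_cons, hlt, decide_true, if_true, Nat.even_add_one,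
        Nat.odd_add_one, Nat.not_odd_iff_even, Nat.not_even_iff_odd, List.mem_cons]
      exact ⟨fun h => Or.inr (ih₂ h), fun h => ih₁ h⟩

theorem mem_altSplit_of_two_le_count {l : List α} (hl : l.Pairwise (· ≤ ·)) {v : α}
    (hv : 2 ≤ l.count v) : v ∈ (altSplit l).1 ∧ v ∈ (altSplit l).2 := by
  induction l with
  | nil => simp at hv
  | cons a t ih =>
    obtain ⟨ha, ht⟩ := List.pairwise_cons.mp hl
    rcases eq_or_ne a v with rfl | hav
    · have hat : a ∈ t := List.count_pos_iff.mp (by rw [List.count_cons_self] at hv; omega)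
      have hcount : t.countP (· < a) = 0 := by
        simpa [List.countP_eq_zero] using fun x hx => ha x hx
      exact ⟨by simp [altSplit], by
        simpa [altSplit] using (mem_altSplit_of_pairwise ht hat).1 (by simp [hcount])⟩
    · rw [List.count_cons_of_ne hav] at hv
      obtain ⟨h₁, h₂⟩ := ih ht hv
      exact ⟨by simp [altSplit, h₂], h₁⟩

end AltSplit

section SortedUnion

variable {α : Type*} [LinearOrder α]

def sortedUnion (s t : Finset α) : List α :=
  (s.val + t.val).sort (· ≤ ·)

theorem sortedUnion_pairwise (s t : Finset α) : (sortedUnion s t).Pairwise (· ≤ ·) :=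
  Multiset.pairwise_sort _ _

theorem coe_sortedUnion (s t : Finset α) : (sortedUnion s t : Multiset α) = s.val + t.val :=
  Multiset.sort_eq _ _

theorem mem_sortedUnion {s t : Finset α} {v : α} : v ∈ sortedUnion s t ↔ v ∈ s ∨ v ∈ t := by
  rw [← Multiset.mem_coe, coe_sortedUnion, Multiset.mem_add, Finset.mem_val, Finset.mem_val]

theorem countP_sortedUnion (s t : Finset α) (p : α → Prop) [DecidablePred p] :
    (sortedUnion s t).countP p = #(s.filter p) + #(t.filter p) := by
  rw [← Multiset.coe_countP, coe_sortedUnion, Multiset.countP_add,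
    Multiset.countP_eq_card_filter, Multiset.countP_eq_card_filter]
  rfl

theorem two_le_count_sortedUnion {s t : Finset α} {v : α} (hs : v ∈ s) (ht : v ∈ t) :
    2 ≤ (sortedUnion s t).count v := by
  rw [← Multiset.coe_count, coe_sortedUnion, Multiset.count_add,
    Multiset.count_eq_one_of_mem s.nodup hs, Multiset.count_eq_one_of_mem t.nodup ht]

theorem mem_altSplit_sortedUnion_of_mem_inter {s t : Finset α} {v : α} (hv : v ∈ s ∩ t) :
    v ∈ (altSplit (sortedUnion s t)).1 ∧ v ∈ (altSplit (sortedUnion s t)).2 :=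
  mem_altSplit_of_two_le_count (sortedUnion_pairwise s t)
    (two_le_count_sortedUnion (mem_inter.mp hv).1 (mem_inter.mp hv).2)

theorem card_filter_lt_of_Ioo_subset [LocallyFiniteOrder α] {s : Finset α} {a b : α} (hab : a < b)
    (hs : Ioo a b ⊆ s) :
    #(s.filter (· < b)) = #(s.filter (· < a)) + (if a ∈ s then 1 else 0) + #(Ioo a b) := by
  have hIoo : s.filter (fun w => a < w ∧ w < b) = Ioo a b := by
    ext w
    simp only [mem_filter, mem_Ioo, and_iff_right_iff_imp]
    exact fun hw => hs (mem_Ioo.mpr hw)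
  rw [← hIoo, card_filter, card_filter, card_filter, ← sum_ite_eq' s a fun _ => 1,
    ← sum_add_distrib, ← sum_add_distrib]
  refine sum_congr rfl fun w _ => ?_
  rcases lt_trichotomy w a with hw | rfl | hw
  · simp [hw, hw.trans hab, hw.ne, hw.not_gt]
  · simp [hab]
  · simp [hw, hw.ne', hw.not_gt]

theorem altSplit_sortedUnion_separates [LocallyFiniteOrder α] {s t : Finset α} {a b : α}
    (hab : a < b) (ha : a ∈ s ∪ t) (ha' : a ∉ s ∩ t) (hb : b ∈ s ∪ t) (hmid : Ioo a b ⊆ s ∩ t) :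
    (a ∈ (altSplit (sortedUnion s t)).1 ∧ b ∈ (altSplit (sortedUnion s t)).2) ∨
      (a ∈ (altSplit (sortedUnion s t)).2 ∧ b ∈ (altSplit (sortedUnion s t)).1) := by
  have hcount : (sortedUnion s t).countP (· < b) =
      (sortedUnion s t).countP (· < a) + 1 + 2 * #(Ioo a b) := by
    rw [countP_sortedUnion, countP_sortedUnion,
      card_filter_lt_of_Ioo_subset hab (hmid.trans inter_subset_left),
      card_filter_lt_of_Ioo_subset hab (hmid.trans inter_subset_right)]
    rw [mem_union] at ha
    rw [mem_inter, not_and_or] at ha'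
    split_ifs <;> first | omega | tauto
  obtain ⟨ha₁, ha₂⟩ :=
    mem_altSplit_of_pairwise (sortedUnion_pairwise s t) (mem_sortedUnion.mpr (mem_union.mp ha))
  obtain ⟨hb₁, hb₂⟩ :=
    mem_altSplit_of_pairwise (sortedUnion_pairwise s t) (mem_sortedUnion.mpr (mem_union.mp hb))
  rcases Nat.even_or_odd ((sortedUnion s t).countP (· < a)) with h | h
  · exact Or.inl ⟨ha₁ h, hb₂ (hcount ▸ h.add_one.add_even (even_two_mul _))⟩
  · exact Or.inr ⟨ha₂ h, hb₁ (hcount ▸ h.add_one.add (even_two_mul _))⟩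

end SortedUnion

theorem isVertexCover_of_forall_lt {α : Type*} [LinearOrder α] {G : SimpleGraph α}
    {C : Finset α} (h : ∀ a b, a < b → G.Adj a b → a ∈ C ∨ b ∈ C) : IsVertexCover G C := by
  intro a b hadj
  rcases lt_trichotomy a b with hab | rfl | hba
  · exact h a b hab hadj
  · exact absurd hadj (G.irrefl)
  · exact (h b a hba hadj.symm).symm

namespace IsProperInterval

variable {n : ℕ} {G : SimpleGraph (Fin n)} {a b : Fin n}

theorem adj_of_mem_Ioo (hG : IsProperInterval G) (hab : a < b) (hadj : G.Adj a b) {w : Fin n}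
    (hw : w ∈ Ioo a b) : G.Adj a w ∧ G.Adj w b := by
  obtain ⟨haw, hwb⟩ := mem_Ioo.mp hw
  exact ⟨hG a b hab hadj a w le_rfl hab.le haw.le hwb.le haw.ne,
    hG a b hab hadj w b haw.le hwb.le hab.le le_rfl hwb.ne⟩

theorem Ioo_subset_inter (hG : IsProperInterval G) {C₁ C₂ : Finset (Fin n)}
    (h₁ : IsVertexCover G C₁) (h₂ : IsVertexCover G C₂) (hab : a < b) (hadj : G.Adj a b)
    (ha : a ∉ C₁ ∩ C₂) (hb : b ∉ C₁ ∩ C₂) : Ioo a b ⊆ C₁ ∩ C₂ := by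
  intro w hw
  obtain ⟨haw, hwb⟩ := hG.adj_of_mem_Ioo hab hadj hw
  by_contra hw'
  rw [mem_inter, not_and_or] at hw'
  -- a cover missing `w` contains both `a` and `b`, so the other cover misses the edge `ab`
  rcases hw' with hw₁ | hw₂
  · rcases h₂ a b hadj with ha₂ | hb₂
    · exact ha (mem_inter.mpr ⟨(h₁ a w haw).resolve_right hw₁, ha₂⟩)
    · exact hb (mem_inter.mpr ⟨(h₁ w b hwb).resolve_left hw₁, hb₂⟩)
  · rcases h₁ a b hadj with ha₁ | hb₁
    · exact ha (mem_inter.mpr ⟨ha₁, (h₂ a w haw).resolve_right hw₂⟩)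
    · exact hb (mem_inter.mpr ⟨hb₁, (h₂ w b hwb).resolve_left hw₂⟩)

theorem altSplit_sortedUnion_covers_edge (hG : IsProperInterval G) {C₁ C₂ : Finset (Fin n)}
    (h₁ : IsVertexCover G C₁) (h₂ : IsVertexCover G C₂) (hab : a < b) (hadj : G.Adj a b) :
    (a ∈ (altSplit (sortedUnion C₁ C₂)).1 ∨ b ∈ (altSplit (sortedUnion C₁ C₂)).1) ∧
      (a ∈ (altSplit (sortedUnion C₁ C₂)).2 ∨ b ∈ (altSplit (sortedUnion C₁ C₂)).2) := by
  by_cases ha : a ∈ C₁ ∩ C₂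
  · obtain ⟨ha₁, ha₂⟩ := mem_altSplit_sortedUnion_of_mem_inter ha
    exact ⟨Or.inl ha₁, Or.inl ha₂⟩
  by_cases hb : b ∈ C₁ ∩ C₂
  · obtain ⟨hb₁, hb₂⟩ := mem_altSplit_sortedUnion_of_mem_inter hb
    exact ⟨Or.inr hb₁, Or.inr hb₂⟩
  have haU : a ∈ C₁ ∪ C₂ := by
    by_contra h
    rw [mem_union, not_or] at h
    exact hb (mem_inter.mpr ⟨(h₁ a b hadj).resolve_left h.1, (h₂ a b hadj).resolve_left h.2⟩)
  have hbU : b ∈ C₁ ∪ C₂ := by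
    by_contra h
    rw [mem_union, not_or] at h
    exact ha (mem_inter.mpr ⟨(h₁ a b hadj).resolve_right h.1, (h₂ a b hadj).resolve_right h.2⟩)
  rcases altSplit_sortedUnion_separates hab haU ha hbU
      (hG.Ioo_subset_inter h₁ h₂ hab hadj ha hb) with ⟨ha₁, hb₂⟩ | ⟨ha₂, hb₁⟩
  · exact ⟨Or.inl ha₁, Or.inr hb₂⟩
  · exact ⟨Or.inr hb₁, Or.inl ha₂⟩

end IsProperInterval

/-- let `G` be a proper interval graph on `[n]` and `C_1, C_2` minimal vertex
covers of `G`.  List the multiset union of `C_1` and `C_2` in increasing order as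
`i_1 ≤ i_2 ≤ ⋯ ≤ i_k` and let `D_1 = {i_ℓ : ℓ odd}`, `D_2 = {i_ℓ : ℓ even}`.  Then `D_1`
and `D_2` are vertex covers of `G` (not necessarily minimal a priori). -/
theorem sorted_pair_is_vertex_cover (n : ℕ) (G : SimpleGraph (Fin n))
    (hG : IsProperInterval G) (C₁ C₂ : Finset (Fin n))
    (h₁ : IsMinVertexCover G C₁) (h₂ : IsMinVertexCover G C₂)
    (l : List (Fin n)) (hl : l = (C₁.val + C₂.val).sort (· ≤ ·))
    (D₁ D₂ : Finset (Fin n))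
    (hD₁ : D₁ = ((altSplit l).1).toFinset) (hD₂ : D₂ = ((altSplit l).2).toFinset) :
    IsVertexCover G D₁ ∧ IsVertexCover G D₂ := by
  subst hl hD₁ hD₂
  have hedge a b (hab : a < b) (hadj : G.Adj a b) :=
    hG.altSplit_sortedUnion_covers_edge h₁.1 h₂.1 hab hadj
  constructor <;> refine isVertexCover_of_forall_lt fun a b hab hadj => ?_ <;>
    simp only [List.mem_toFinset]
  · exact (hedge a b hab hadj).1
  · exact (hedge a b hab hadj).2
end

section
/- Let G be a finite simple graph, π = (V_1,…,V_m) an arbitrary clique partition of G, and r_1,…,r_m positive integers. Let K be a field and let I be the vertex cover ideal of the clique multi-whiskered graph G^π(r_1,…,r_m) in the polynomial ring over K whose variables are indexed by the vertices of G^π(r_1,…,r_m). Then for every positive integer k, the power I^k has linear quotients: there exist monomials h_1,…,h_s generating I^k such that for every i with 2 ≤ i ≤ s, the colon ideal (h_1,…,h_{i−1}) : (h_i) is generated by a subset of the variables. -/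
/-- The clique multi-whiskered graph `G^π(r_1,…,r_m)`: to each part `V_i = π⁻¹(i)` of the
clique partition `π` we attach `r i` new whisker vertices `z_1^{(i)}, …, z_{r_i}^{(i)}`
(encoded as `Sum.inr ⟨i, k⟩`), each joined to every vertex of `V_i`. -/
def cliqueWhisker {V : Type*} {m : ℕ} (G : SimpleGraph V) (π : V → Fin m)
    (r : Fin m → ℕ) : SimpleGraph (V ⊕ (Σ i : Fin m, Fin (r i))) :=
  SimpleGraph.fromRel (fun a b =>
    match a, b with
    | Sum.inl v, Sum.inl w => G.Adj v w
    | Sum.inl v, Sum.inr p => π v = p.1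
    | Sum.inr _, _ => False)

/-- The minimal vertex cover of `G^π(r_1,…,r_m)` attached to a vertex cover `C` of `G`:
`C' = C ∪ ⋃_{i : V_i ⊄ C} {z_1^{(i)}, …, z_{r_i}^{(i)}}`. -/
def whiskCover {V : Type*} [Fintype V] [DecidableEq V] {m : ℕ} (π : V → Fin m)
    (r : Fin m → ℕ) (C : Finset V) : Finset (V ⊕ (Σ i : Fin m, Fin (r i))) :=
  C.image Sum.inl ∪
    (Finset.univ.filter (fun p : Σ i : Fin m, Fin (r i) =>
      ¬ (Finset.univ.filter (fun v => π v = p.1) ⊆ C))).image Sum.inr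
open MvPolynomial

/-!
The minimal vertex covers of `G^π` are the sets `whiskCover π r D` for the vertex covers `D` of
`G`, so `I^k` is generated by the monomials whose exponent is the sum of the indicator vectors of
`k` such sets. Because every part `V_j` is a clique, a cover of `G` misses at most one vertex of
`V_j`, and it misses one exactly when it picks up the whiskers of `V_j`; hence such an exponent is
determined by its restriction to `V`. Enlarging one of the `k` covers by a vertex `v` raises the
exponent at `v` by one and can only lower it at the whiskers. List the generators by decreasing
degree in the variables of `V`: if `a` comes before `u`, then `u` is smaller than `a` at some
`v ∈ V`, and the exchange at `v` gives a generator that comes before `u` and divides `u · x_v`.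
So every colon ideal is generated by variables.
-/

section

open Finset

theorem Ideal.span_image_pow {R ι : Type*} [CommSemiring R] (g : ι → R) (P : Set ι) (n : ℕ) :
    Ideal.span (g '' P) ^ n =
      Ideal.span ((fun D : Fin n → ι => ∏ i, g (D i)) '' Set.univ.pi fun _ => P) := by
  rw [Ideal.span, Submodule.span_pow]
  congr 1
  ext a
  rw [Set.mem_pow]
  constructor
  · rintro ⟨f, rfl⟩
    choose D hD hgD using fun i => (f i).2
    exact ⟨D, Set.mem_univ_pi.2 hD, by simp [List.prod_ofFn, hgD]⟩
  · rintro ⟨D, hD, rfl⟩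
    exact ⟨fun i => ⟨g (D i), Set.mem_image_of_mem g (Set.mem_univ_pi.1 hD i)⟩,
      by simp [List.prod_ofFn]⟩

theorem Finset.exists_list_nodup_pairwise_ge {α β : Type*} [LinearOrder β] (s : Finset α)
    (f : α → β) :
    ∃ l : List α, l.Nodup ∧ (∀ a, a ∈ l ↔ a ∈ s) ∧ l.Pairwise fun a b => f b ≤ f a := by
  have hperm := List.mergeSort_perm s.toList fun a b => decide (f b ≤ f a)
  refine ⟨_, hperm.nodup_iff.2 s.nodup_toList, fun a => by rw [hperm.mem_iff, mem_toList], ?_⟩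
  simpa using List.pairwise_mergeSort
    (fun a b c hab hbc => decide_eq_true ((of_decide_eq_true hbc).trans (of_decide_eq_true hab)))
    (fun a b => by simpa using le_total (f b) (f a)) s.toList

namespace MvPolynomial

variable {σ R : Type*} [CommSemiring R]

theorem colon_span_monomial_eq_span_X {A : Set (σ →₀ ℕ)} {u : σ →₀ ℕ}
    (h : ∀ a ∈ A, ∃ x, u x < a x ∧ ∃ b ∈ A, b ≤ u + Finsupp.single x 1) :
    (Ideal.span ((fun a => monomial a (1 : R)) '' A)).colon
        (Ideal.span {monomial u (1 : R)}) =
      Ideal.span (X '' {x | ∃ b ∈ A, b ≤ u + Finsupp.single x 1}) := by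
  ext f
  rw [Submodule.mem_colon_span_singleton, smul_eq_mul, mem_ideal_span_monomial_image,
    mem_ideal_span_X_image]
  have hsupp : (f * monomial u 1).support = f.support.map (addRightEmbedding u) :=
    AddMonoidAlgebra.support_coeff_mul_single f _ (by simp) _
  simp only [hsupp, Finset.forall_mem_map, addRightEmbedding_apply]
  refine forall₂_congr fun d _ => ⟨?_, ?_⟩
  · rintro ⟨a, ha, hle⟩
    obtain ⟨x, hlt, hx⟩ := h a ha
    exact ⟨x, hx, fun h0 => (hle x).not_gt (by simpa [h0] using hlt)⟩
  · rintro ⟨x, ⟨b, hb, hle⟩, hx⟩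
    refine ⟨b, hb, hle.trans ?_⟩
    rw [add_comm d]
    exact add_le_add_right (Finsupp.single_le_iff.2 (Nat.one_le_iff_ne_zero.2 hx)) u

theorem exists_linear_quotients_of_exchange {β : Type*} [LinearOrder β] (T : Finset (σ →₀ ℕ))
    (deg : (σ →₀ ℕ) → β)
    (hexch : ∀ a ∈ T, ∀ u ∈ T, a ≠ u → deg u ≤ deg a →
      ∃ x, u x < a x ∧ ∃ b ∈ T, deg u < deg b ∧ b ≤ u + Finsupp.single x 1) :
    ∃ (s : ℕ) (h : Fin s → MvPolynomial σ R), (∀ i, ∃ c, h i = monomial c 1) ∧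
      Ideal.span (Set.range h) = Ideal.span ((fun a => monomial a 1) '' T) ∧
      ∀ i : Fin s, ∃ S : Set σ,
        (Ideal.span {g | ∃ j : Fin s, j < i ∧ g = h j}).colon (Ideal.span {h i}) =
          Ideal.span (X '' S) := by
  obtain ⟨L, hnodup, hmem, hsorted⟩ := T.exists_list_nodup_pairwise_ge deg
  have hdeg : ∀ i j : Fin L.length, i ≤ j → deg L[j] ≤ deg L[i] := by
    intro i j hij
    rcases hij.lt_or_eq with hij | rfl
    · exact List.pairwise_iff_getElem.1 hsorted i j i.2 j.2 hij
    · rfl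
  have hmemT : ∀ i : Fin L.length, L[i] ∈ T := fun i => (hmem _).1 (List.getElem_mem _)
  refine ⟨L.length, fun i => monomial L[i] 1, fun i => ⟨_, rfl⟩, ?_, fun i => ?_⟩
  · congr 1
    ext g
    constructor
    · rintro ⟨i, rfl⟩
      exact ⟨L[i], hmemT i, rfl⟩
    · rintro ⟨a, ha, rfl⟩
      obtain ⟨t, ht, rfl⟩ := List.mem_iff_getElem.1 ((hmem a).2 ha)
      exact ⟨⟨t, ht⟩, rfl⟩
  · set A := (fun j : Fin L.length => L[j]) '' Set.Iio i
    have hA : {g | ∃ j : Fin L.length, j < i ∧ g = monomial L[j] (1 : R)} =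
        (fun a => monomial a 1) '' A := by
      ext; simp [A, Set.image_image, eq_comm]
    refine ⟨_, hA ▸ colon_span_monomial_eq_span_X ?_⟩
    rintro _ ⟨j, hji, rfl⟩
    obtain ⟨x, hlt, b, hb, hdegb, hle⟩ := hexch _ (hmemT j) _ (hmemT i)
      (fun e => hji.ne (Fin.ext (hnodup.getElem_inj_iff.1 e))) (hdeg j i hji.le)
    obtain ⟨t, ht, rfl⟩ := List.mem_iff_getElem.1 ((hmem b).2 hb)
    have hti : (⟨t, ht⟩ : Fin L.length) < i :=
      lt_of_not_ge fun hit => (hdegb.trans_le (hdeg i _ hit)).false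
    exact ⟨x, hlt, L[t], ⟨⟨t, ht⟩, hti, rfl⟩, hle⟩

end MvPolynomial

variable {V : Type*} {m : ℕ} {G : SimpleGraph V} {π : V → Fin m} {r : Fin m → ℕ}

theorem cliqueWhisker_adj_inl_inl {v w : V} :
    (cliqueWhisker G π r).Adj (.inl v) (.inl w) ↔ G.Adj v w := by
  simpa [cliqueWhisker, G.adj_comm w] using G.ne_of_adj

theorem cliqueWhisker_adj_inl_inr {v : V} {p : Σ i : Fin m, Fin (r i)} :
    (cliqueWhisker G π r).Adj (.inl v) (.inr p) ↔ π v = p.1 := by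
  simp [cliqueWhisker]

theorem cliqueWhisker_not_adj_inr_inr {p q : Σ i : Fin m, Fin (r i)} :
    ¬ (cliqueWhisker G π r).Adj (.inr p) (.inr q) := by
  simp [cliqueWhisker]

theorem IsVertexCover.mono {C C' : Finset V} (hC : IsVertexCover G C) (h : C ⊆ C') :
    IsVertexCover G C' := fun v w hvw => (hC v w hvw).imp (@h v) (@h w)

section whiskCover

variable [DecidableEq V]

theorem IsVertexCover.card_filter_mem_add_ite {C s : Finset V} (hC : IsVertexCover G C)
    (hs : G.IsClique (s : Set V)) : #{v ∈ s | v ∈ C} + (if s ⊆ C then 0 else 1) = #s := by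
  rw [← card_filter_add_card_filter_not (s := s) (· ∈ C)]
  congr 1
  split_ifs with hsC
  · exact (card_eq_zero.2 (filter_eq_empty_iff.2 fun v hv => not_not.2 (hsC hv))).symm
  · refine le_antisymm (one_le_card.2 ?_) (card_le_one.2 ?_)
    · obtain ⟨v, hv, hvC⟩ := not_subset.1 hsC
      exact ⟨v, mem_filter.2 ⟨hv, hvC⟩⟩
    · simp only [mem_filter]
      intro v ⟨hv, hvC⟩ w ⟨hw, hwC⟩
      by_contra hvw
      exact (hC v w (hs hv hw hvw)).elim hvC hwC

variable [Fintype V]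

@[simp]
theorem inl_mem_whiskCover {C : Finset V} {v : V} :
    Sum.inl v ∈ whiskCover π r C ↔ v ∈ C := by
  simp [whiskCover]

@[simp]
theorem inr_mem_whiskCover {C : Finset V} {p : Σ i : Fin m, Fin (r i)} :
    Sum.inr p ∈ whiskCover π r C ↔ ¬ ({v | π v = p.1} : Finset V) ⊆ C := by
  simp [whiskCover]

theorem whiskCover_insert_subset (C : Finset V) (v : V) :
    whiskCover π r (insert v C) ⊆ insert (Sum.inl v) (whiskCover π r C) := by
  rintro (w | p) h
  · simp_all
  · simp only [inr_mem_whiskCover, mem_insert, reduceCtorEq, false_or] at h ⊢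
    exact fun hC => h (hC.trans (subset_insert v C))

theorem isVertexCover_whiskCover {D : Finset V} (hD : IsVertexCover G D) :
    IsVertexCover (cliqueWhisker G π r) (whiskCover π r D) := by
  rintro (v | p) (w | q) hvw
  · simpa using hD v w (cliqueWhisker_adj_inl_inl.1 hvw)
  · by_cases hv : v ∈ D
    · simp [hv]
    · refine Or.inr (inr_mem_whiskCover.2 fun hsub => hv (hsub ?_))
      simpa using cliqueWhisker_adj_inl_inr.1 hvw
  · by_cases hw : w ∈ D
    · simp [hw]
    · refine Or.inl (inr_mem_whiskCover.2 fun hsub => hw (hsub ?_))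
      simpa using cliqueWhisker_adj_inl_inr.1 hvw.symm
  · exact absurd hvw cliqueWhisker_not_adj_inr_inr

theorem isMinVertexCover_whiskCover
    (hclique : ∀ v w : V, π v = π w → v ≠ w → G.Adj v w) (hr : ∀ i, 0 < r i)
    {D : Finset V} (hD : IsVertexCover G D) :
    IsMinVertexCover (cliqueWhisker G π r) (whiskCover π r D) := by
  refine ⟨isVertexCover_whiskCover hD, fun D' hsub hcov => hsub.antisymm ?_⟩
  have key : ∀ x y, (cliqueWhisker G π r).Adj x y → x ∉ whiskCover π r D → y ∈ D' :=
    fun x y hxy hx => (hcov x y hxy).resolve_left fun h => hx (hsub h)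
  rintro (v | p) hy
  · rw [inl_mem_whiskCover] at hy
    by_cases hfib : ({u | π u = π v} : Finset V) ⊆ D
    · have hz : (cliqueWhisker G π r).Adj (.inl v) (.inr ⟨π v, ⟨0, hr _⟩⟩) :=
        cliqueWhisker_adj_inl_inr.2 rfl
      exact key _ _ hz.symm (by simpa using hfib)
    · obtain ⟨w, hw, hwD⟩ := not_subset.1 hfib
      exact key (.inl w) _ (cliqueWhisker_adj_inl_inl.2 <|
        hclique w v (by simpa using hw) fun h => hwD (h ▸ hy)) (by simpa using hwD)
  · obtain ⟨v, hv, hvD⟩ := not_subset.1 (inr_mem_whiskCover.1 hy)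
    exact key (.inl v) _ (cliqueWhisker_adj_inl_inr.2 (by simpa using hv)) (by simpa using hvD)

theorem IsMinVertexCover.exists_eq_whiskCover {C : Finset (V ⊕ (Σ i : Fin m, Fin (r i)))}
    (hC : IsMinVertexCover (cliqueWhisker G π r) C) :
    ∃ D, IsVertexCover G D ∧ whiskCover π r D = C := by
  set D : Finset V := {v | Sum.inl v ∈ C}
  have hD : IsVertexCover G D := fun v w hvw => by
    simpa [D] using hC.1 _ _ (cliqueWhisker_adj_inl_inl.2 hvw)
  refine ⟨D, hD, hC.2 _ ?_ (isVertexCover_whiskCover hD)⟩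
  rintro (v | p) hy
  · simpa [D] using hy
  · obtain ⟨v, hv, hvD⟩ := not_subset.1 (inr_mem_whiskCover.1 hy)
    exact (hC.1 (.inl v) _ (cliqueWhisker_adj_inl_inr.2 (by simpa using hv))).resolve_left
      (by simpa [D] using hvD)

theorem setOf_isMinVertexCover_cliqueWhisker
    (hclique : ∀ v w : V, π v = π w → v ≠ w → G.Adj v w) (hr : ∀ i, 0 < r i) :
    {C | IsMinVertexCover (cliqueWhisker G π r) C} =
      whiskCover π r '' {D | IsVertexCover G D} := by
  ext C
  exact ⟨fun hC => hC.exists_eq_whiskCover,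
    fun ⟨D, hD, hDC⟩ => hDC ▸ isMinVertexCover_whiskCover hclique hr hD⟩

variable {ι : Type*} [Fintype ι]

noncomputable def coverExponent (π : V → Fin m) (r : Fin m → ℕ) (D : ι → Finset V) :
    (V ⊕ (Σ i : Fin m, Fin (r i))) →₀ ℕ :=
  ∑ i, ∑ w ∈ whiskCover π r (D i), Finsupp.single w 1

theorem prod_prod_X_whiskCover (K : Type*) [CommSemiring K] (D : ι → Finset V) :
    ∏ i, ∏ w ∈ whiskCover π r (D i), (MvPolynomial.X w : MvPolynomial _ K) =
      MvPolynomial.monomial (coverExponent π r D) 1 := by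
  simp only [coverExponent, MvPolynomial.monomial_sum_one]
  rfl

theorem coverExponent_apply (D : ι → Finset V) (y : V ⊕ (Σ i : Fin m, Fin (r i))) :
    coverExponent π r D y = #{i | y ∈ whiskCover π r (D i)} := by
  simp [coverExponent, Finsupp.finsetSum_apply, Finsupp.single_apply]

theorem coverExponent_apply_le (D : ι → Finset V) (y : V ⊕ (Σ i : Fin m, Fin (r i))) :
    coverExponent π r D y ≤ Fintype.card ι := by
  rw [coverExponent_apply]
  exact card_le_univ _

theorem coverExponent_apply_inl (D : ι → Finset V) (v : V) :
    coverExponent π r D (.inl v) = #{i | v ∈ D i} := by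
  simp [coverExponent_apply]

theorem coverExponent_apply_inr (D : ι → Finset V) (p : Σ i : Fin m, Fin (r i)) :
    coverExponent π r D (.inr p) = #{i | ¬ ({v | π v = p.1} : Finset V) ⊆ D i} := by
  simp [coverExponent_apply]

theorem sum_coverExponent_fiber (hclique : ∀ v w : V, π v = π w → v ≠ w → G.Adj v w)
    {D : ι → Finset V} (hD : ∀ i, IsVertexCover G (D i)) (j : Fin m) (z : Fin (r j)) :
    ∑ v ∈ {v | π v = j}, coverExponent π r D (.inl v) + coverExponent π r D (.inr ⟨j, z⟩) =
      Fintype.card ι * #{v | π v = j} := by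
  set F : Finset V := {v | π v = j}
  have hF : G.IsClique (F : Set V) := fun v hv w hw => hclique v w (by simp_all [F])
  calc ∑ v ∈ F, coverExponent π r D (.inl v) + coverExponent π r D (.inr ⟨j, z⟩)
      = ∑ i, (#{v ∈ F | v ∈ D i} + if F ⊆ D i then 0 else 1) := by
        simp only [coverExponent_apply_inl, coverExponent_apply_inr, card_filter,
          sum_add_distrib, ite_not]
        rw [sum_comm]
    _ = Fintype.card ι * #F := by
        rw [sum_const_nat fun i _ => (hD i).card_filter_mem_add_ite hF, card_univ]

theorem coverExponent_eq_of_apply_inl_eq (hclique : ∀ v w : V, π v = π w → v ≠ w → G.Adj v w)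
    {D D' : ι → Finset V} (hD : ∀ i, IsVertexCover G (D i)) (hD' : ∀ i, IsVertexCover G (D' i))
    (h : ∀ v, coverExponent π r D (.inl v) = coverExponent π r D' (.inl v)) :
    coverExponent π r D = coverExponent π r D' := by
  ext (v | ⟨j, z⟩)
  · exact h v
  · have := sum_coverExponent_fiber hclique hD j z
    rw [sum_congr rfl fun v _ => h v, ← sum_coverExponent_fiber hclique hD' j z] at this
    exact Nat.add_left_cancel this

theorem exists_coverExponent_apply_inl_lt
    (hclique : ∀ v w : V, π v = π w → v ≠ w → G.Adj v w)
    {D D' : ι → Finset V} (hD : ∀ i, IsVertexCover G (D i)) (hD' : ∀ i, IsVertexCover G (D' i))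
    (hne : coverExponent π r D' ≠ coverExponent π r D)
    (hdeg : ∑ v, coverExponent π r D (.inl v) ≤ ∑ v, coverExponent π r D' (.inl v)) :
    ∃ v, coverExponent π r D (.inl v) < coverExponent π r D' (.inl v) := by
  by_contra! hle
  have heq := (sum_eq_sum_iff_of_le fun v _ => hle v).1
    (le_antisymm (sum_le_sum fun v _ => hle v) hdeg)
  exact hne (coverExponent_eq_of_apply_inl_eq hclique hD' hD fun v => heq v (mem_univ v))

theorem exists_coverExponent_le_add_single [DecidableEq ι] {D : ι → Finset V}
    (hD : ∀ i, IsVertexCover G (D i)) {v : V} (hv : coverExponent π r D (.inl v) < Fintype.card ι) :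
    ∃ D' : ι → Finset V, (∀ i, IsVertexCover G (D' i)) ∧
      ∑ w, coverExponent π r D (.inl w) < ∑ w, coverExponent π r D' (.inl w) ∧
      coverExponent π r D' ≤ coverExponent π r D + Finsupp.single (.inl v) 1 := by
  obtain ⟨i, hi⟩ : ∃ i, v ∉ D i := by
    by_contra! h
    simp [coverExponent_apply_inl, h] at hv
  set D' := Function.update D i (insert v (D i))
  have hDD' : ∀ j, D j ⊆ D' j := fun j => by
    rcases eq_or_ne j i with rfl | hj
    · simp [D', subset_insert]
    · simp [D', hj]
  have hwhisk : ∀ j y, y ∈ whiskCover π r (D' j) →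
      j = i ∧ y = .inl v ∨ y ∈ whiskCover π r (D j) := by
    intro j y hy
    rcases eq_or_ne j i with rfl | hj
    · simp only [D', Function.update_self] at hy
      simpa using whiskCover_insert_subset (D j) v hy
    · simpa [D', hj] using hy
  refine ⟨D', (Function.forall_update_iff D fun _ C => IsVertexCover G C).2
    ⟨(hD i).mono (subset_insert _ _), fun j _ => hD j⟩, ?_, fun y => ?_⟩
  · simp only [coverExponent_apply_inl]
    have hmono : ∀ w, ({j | w ∈ D j} : Finset ι) ⊆ ({j | w ∈ D' j} : Finset ι) :=
      fun w j => by simpa using @hDD' j w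
    refine sum_lt_sum (fun w _ => card_le_card (hmono w)) ⟨v, mem_univ v, card_lt_card ?_⟩
    exact (ssubset_iff_of_subset (hmono v)).2 ⟨i, by simp [D'], by simp [hi]⟩
  · rw [Finsupp.add_apply, coverExponent_apply, coverExponent_apply]
    by_cases hy : y = .inl v
    · subst hy
      rw [Finsupp.single_eq_same]
      refine (card_le_card fun j hj => ?_).trans (card_insert_le i _)
      rcases hwhisk j _ (mem_filter.1 hj).2 with ⟨rfl, -⟩ | h
      · exact mem_insert_self _ _
      · exact mem_insert_of_mem (mem_filter.2 ⟨mem_univ _, h⟩)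
    · rw [Finsupp.single_apply, if_neg (Ne.symm hy), add_zero]
      refine card_le_card fun j hj => ?_
      simpa [hy] using hwhisk j _ (mem_filter.1 hj).2

theorem coverExponent_exchange [DecidableEq ι]
    (hclique : ∀ v w : V, π v = π w → v ≠ w → G.Adj v w)
    {D D' : ι → Finset V} (hD : ∀ i, IsVertexCover G (D i)) (hD' : ∀ i, IsVertexCover G (D' i))
    (hne : coverExponent π r D' ≠ coverExponent π r D)
    (hdeg : ∑ v, coverExponent π r D (.inl v) ≤ ∑ v, coverExponent π r D' (.inl v)) :
    ∃ x, coverExponent π r D x < coverExponent π r D' x ∧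
      ∃ D'' : ι → Finset V, (∀ i, IsVertexCover G (D'' i)) ∧
        ∑ w, coverExponent π r D (.inl w) < ∑ w, coverExponent π r D'' (.inl w) ∧
        coverExponent π r D'' ≤ coverExponent π r D + Finsupp.single x 1 := by
  obtain ⟨v, hv⟩ := exists_coverExponent_apply_inl_lt hclique hD hD' hne hdeg
  exact ⟨.inl v, hv,
    exists_coverExponent_le_add_single hD (hv.trans_le (coverExponent_apply_le D' _))⟩

end whiskCover

end

theorem cover_ideal_powers_of_cliqueWhisker_linear_quotients_general
    {V : Type*} [Fintype V] [DecidableEq V] {m : ℕ}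
    (K : Type*) [Field K]
    (G : SimpleGraph V) (π : V → Fin m)
    (hclique : ∀ v w : V, π v = π w → v ≠ w → G.Adj v w)
    (r : Fin m → ℕ) (hr : ∀ i, 0 < r i)
    (I : Ideal (MvPolynomial (V ⊕ (Σ i : Fin m, Fin (r i))) K))
    (hI : I = Ideal.span { f | ∃ C : Finset (V ⊕ (Σ i : Fin m, Fin (r i))),
      IsMinVertexCover (cliqueWhisker G π r) C ∧ f = ∏ w ∈ C, X w })
    (k : ℕ) :
    ∃ (s : ℕ) (h : Fin s → MvPolynomial (V ⊕ (Σ i : Fin m, Fin (r i))) K),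
      (∀ i : Fin s, ∃ c : (V ⊕ (Σ i : Fin m, Fin (r i))) →₀ ℕ,
        h i = MvPolynomial.monomial c 1) ∧
      Ideal.span (Set.range h) = I ^ k ∧
      ∀ i : Fin s, ∃ S : Set (V ⊕ (Σ i : Fin m, Fin (r i))),
        (Ideal.span { g | ∃ j : Fin s, j < i ∧ g = h j }).colon (Ideal.span {h i})
          = Ideal.span (MvPolynomial.X '' S) := by
  set T := coverExponent π r '' Set.univ.pi fun _ : Fin k => {D | IsVertexCover G D}
  have hT : T.Finite := (Set.toFinite _).image _
  have hIk : I ^ k = Ideal.span ((fun a => monomial a (1 : K)) '' T) := by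
    have hgen : { f | ∃ C : Finset (V ⊕ (Σ i : Fin m, Fin (r i))),
        IsMinVertexCover (cliqueWhisker G π r) C ∧ f = ∏ w ∈ C, X w } =
        (fun C => ∏ w ∈ C, (X w : MvPolynomial _ K)) ''
          {C | IsMinVertexCover (cliqueWhisker G π r) C} := by
      ext; simp [eq_comm]
    rw [hI, hgen, setOf_isMinVertexCover_cliqueWhisker hclique hr, Set.image_image,
      Ideal.span_image_pow, Set.image_image]
    simp only [prod_prod_X_whiskCover]
  obtain ⟨s, h, hmon, hspan, hcolon⟩ := exists_linear_quotients_of_exchange (R := K)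
    hT.toFinset (fun e => ∑ v, e (.inl v)) (by
      simp only [Set.Finite.mem_toFinset, T, Set.mem_image, Set.mem_univ_pi, Set.mem_ofPred_eq]
      rintro _ ⟨D', hD', rfl⟩ _ ⟨D, hD, rfl⟩ hne hdeg
      obtain ⟨x, hx, D'', hD'', hlt, hle⟩ := coverExponent_exchange hclique hD hD' hne hdeg
      exact ⟨x, hx, _, ⟨D'', hD'', rfl⟩, hlt, hle⟩)
  exact ⟨s, h, hmon, by rw [hspan, hT.coe_toFinset, hIk], hcolon⟩

/-- Theorem 3.2: let `G` be a finite simple graph, `π` a clique partition of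
`G`, `r_1, …, r_m` positive integers and `K` a field.  Then every power `I^k` (`k ≥ 1`) of the
vertex cover ideal `I` of the clique multi-whiskered graph `G^π(r_1,…,r_m)` has linear
quotients: there are monomials `h_1, …, h_s` generating `I^k` such that each colon ideal
`(h_1,…,h_{i−1}) : (h_i)` is generated by a subset of the variables. -/
theorem cover_ideal_powers_of_cliqueWhisker_linear_quotients
    {V : Type*} [Fintype V] [DecidableEq V] {m : ℕ}
    (K : Type*) [Field K]
    (G : SimpleGraph V) (π : V → Fin m)
    (hclique : ∀ v w : V, π v = π w → v ≠ w → G.Adj v w)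
    (r : Fin m → ℕ) (hr : ∀ i, 0 < r i)
    (I : Ideal (MvPolynomial (V ⊕ (Σ i : Fin m, Fin (r i))) K))
    (hI : I = Ideal.span { f | ∃ C : Finset (V ⊕ (Σ i : Fin m, Fin (r i))),
      IsMinVertexCover (cliqueWhisker G π r) C ∧ f = ∏ w ∈ C, X w })
    (k : ℕ) (hk : 0 < k) :
    ∃ (s : ℕ) (h : Fin s → MvPolynomial (V ⊕ (Σ i : Fin m, Fin (r i))) K),
      (∀ i : Fin s, ∃ c : (V ⊕ (Σ i : Fin m, Fin (r i))) →₀ ℕ,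
        h i = MvPolynomial.monomial c 1) ∧
      Ideal.span (Set.range h) = I ^ k ∧
      ∀ i : Fin s, ∃ S : Set (V ⊕ (Σ i : Fin m, Fin (r i))),
        (Ideal.span { g | ∃ j : Fin s, j < i ∧ g = h j }).colon (Ideal.span {h i})
          = Ideal.span (MvPolynomial.X '' S) :=
  cover_ideal_powers_of_cliqueWhisker_linear_quotients_general K G π hclique r hr I hI k
end
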